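/- arXiv:1708.05457 — 10 statements merged into one kernel-verified Lean document; each statement's English description precedes it below -/
import Mathlib

section
/- Let h be an inner product on a finite-dimensional real vector space V and W ∈ V a vector with h(W,W) < 1. Define Z: V → [0,∞) by requiring h(v/Z(v) − W, v/Z(v) − W) = 1 for v ≠ 0 and Z(0) = 0. Then Z(v) = √(a(v,v)) + β(v), where λ = 1 − h(W,W), a(u,w) = (λ h(u,w) + h(u,W) h(w,W))/λ², and β(w) = −h(w,W)/λ. -/
open scoped RealInnerProductSpace

/-- Zermelo data `(h, W)` on an inner product space (with `h` the inner product) yields a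
Randers norm with the stated `a` and `β`. -/
theorem zermelo_eq_randers {V : Type*} [NormedAddCommGroup V] [InnerProductSpace ℝ V]
    [FiniteDimensional ℝ V] (W : V) (hW : ⟪W, W⟫ < 1)
    (Z : V → ℝ) (hZ0 : Z 0 = 0) (hZpos : ∀ v : V, v ≠ 0 → 0 < Z v)
    (hZ : ∀ v : V, v ≠ 0 → ⟪(Z v)⁻¹ • v - W, (Z v)⁻¹ • v - W⟫ = (1 : ℝ)) :
    ∀ v : V, Z v =
      Real.sqrt (((1 - ⟪W, W⟫) * ⟪v, v⟫ + ⟪v, W⟫ * ⟪v, W⟫) / (1 - ⟪W, W⟫) ^ 2)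
        + (-⟪v, W⟫ / (1 - ⟪W, W⟫)) := by
  intro v
  by_cases hv : v = 0
  · subst hv
    simp [hZ0]
  · have hp := hZpos v hv
    have hz := hZ v hv
    have hl : 0 < 1 - ⟪W, W⟫ := by linarith
    have hvv : 0 < ⟪v, v⟫ :=
      real_inner_self_nonneg.lt_of_ne (fun h => hv (inner_self_eq_zero.mp h.symm))
    rw [real_inner_sub_sub_self, real_inner_smul_left, real_inner_smul_right,
      real_inner_smul_left] at hz
    have hzne : Z v ≠ 0 := ne_of_gt hp
    have key : (1 - ⟪W, W⟫) * (Z v) ^ 2 + 2 * Z v * ⟪v, W⟫ - ⟪v, v⟫ = 0 := by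
      field_simp at hz
      nlinarith [hz]
    have hnn : 0 ≤ (1 - ⟪W, W⟫) * Z v + ⟪v, W⟫ := by
      nlinarith [mul_pos hl hp, mul_pos hp hp]
    have hnn2 : 0 ≤ Z v + ⟪v, W⟫ / (1 - ⟪W, W⟫) := by
      have heq : Z v + ⟪v, W⟫ / (1 - ⟪W, W⟫)
          = ((1 - ⟪W, W⟫) * Z v + ⟪v, W⟫) / (1 - ⟪W, W⟫) := by
        field_simp
      rw [heq]
      exact div_nonneg hnn hl.le
    have hA : ((1 - ⟪W, W⟫) * ⟪v, v⟫ + ⟪v, W⟫ * ⟪v, W⟫) / (1 - ⟪W, W⟫) ^ 2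
        = (Z v + ⟪v, W⟫ / (1 - ⟪W, W⟫)) ^ 2 := by
      field_simp
      nlinarith [key]
    rw [hA, Real.sqrt_sq hnn2]
    ring
end

section
/- Let a be an inner product on a finite-dimensional real vector space V and β a linear form on V with a-norm strictly less than 1; write β(v) = a(v, B) for a unique vector B. Set μ = 1 − a(B,B), h(w,u) = μ(a(w,u) − a(B,w)a(B,u)), and W = −B/μ. Then h is a positive-definite inner product, h(W,W) < 1, and the Randers norm Z(v) = √(a(v,v)) + β(v) satisfies h(v/Z(v) − W, v/Z(v) − W) = 1 for all v ≠ 0. -/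
open scoped RealInnerProductSpace

/-!
With `μ = 1 - ⟪B, B⟫`, `x = ⟪v, B⟫` and `z = Z v`, the defining relation `√⟪v, v⟫ = z - x`
gives `⟪v, v⟫ - x² = z² - 2 z x`. Expanding `h(v/z + B/μ, v/z + B/μ)` with this substitution,
every term involving `v` cancels and only `μ (1 + ⟪B, B⟫/μ) = 1` remains. Positivity of `h` and
of `Z` are both Cauchy–Schwarz with `‖B‖ < 1`, and `h(W, W)` is just `⟪B, B⟫`.
-/

section

variable {V : Type*} [NormedAddCommGroup V] [InnerProductSpace ℝ V]

noncomputable def randersNorm (B v : V) : ℝ := √⟪v, v⟫ + ⟪v, B⟫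

def zermeloInner (B w u : V) : ℝ := (1 - ⟪B, B⟫) * (⟪w, u⟫ - ⟪B, w⟫ * ⟪B, u⟫)

noncomputable def zermeloWind (B : V) : V := -((1 - ⟪B, B⟫)⁻¹ • B)

theorem abs_real_inner_lt_norm_of_norm_lt_one {B : V} (hB : ‖B‖ < 1) {v : V} (hv : v ≠ 0) :
    |⟪v, B⟫| < ‖v‖ :=
  calc |⟪v, B⟫| ≤ ‖v‖ * ‖B‖ := abs_real_inner_le_norm v B
    _ < ‖v‖ := mul_lt_of_lt_one_right (norm_pos_iff.mpr hv) hB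

theorem randersNorm_pos {B : V} (hB : ‖B‖ < 1) {v : V} (hv : v ≠ 0) : 0 < randersNorm B v := by
  rw [randersNorm, ← norm_eq_sqrt_real_inner]
  linarith [neg_abs_le ⟪v, B⟫, abs_real_inner_lt_norm_of_norm_lt_one hB hv]

theorem zermeloInner_self_pos {B : V} (hB : ‖B‖ < 1) {v : V} (hv : v ≠ 0) :
    0 < zermeloInner B v v := by
  have hμ : 0 < 1 - ⟪B, B⟫ := by
    rw [real_inner_self_eq_norm_sq]
    nlinarith [norm_nonneg B]
  have hCS : ⟪B, v⟫ * ⟪B, v⟫ < ⟪v, v⟫ := by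
    rw [real_inner_comm, ← sq, ← sq_abs, real_inner_self_eq_norm_sq]
    exact pow_lt_pow_left₀ (abs_real_inner_lt_norm_of_norm_lt_one hB hv) (abs_nonneg _)
      two_ne_zero
  exact mul_pos hμ (sub_pos.mpr hCS)

theorem zermeloInner_wind_wind {B : V} (hB : ⟪B, B⟫ ≠ 1) :
    zermeloInner B (zermeloWind B) (zermeloWind B) = ⟪B, B⟫ := by
  have hμ : 1 - ⟪B, B⟫ ≠ 0 := sub_ne_zero.mpr hB.symm
  simp only [zermeloInner, zermeloWind, inner_neg_left, inner_neg_right, real_inner_smul_left,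
    real_inner_smul_right]
  field_simp

theorem zermeloInner_inv_randersNorm_smul_sub_wind {B : V} (hB : ⟪B, B⟫ ≠ 1) {v : V}
    (hZ : randersNorm B v ≠ 0) :
    zermeloInner B ((randersNorm B v)⁻¹ • v - zermeloWind B)
      ((randersNorm B v)⁻¹ • v - zermeloWind B) = 1 := by
  have hμ : 1 - ⟪B, B⟫ ≠ 0 := sub_ne_zero.mpr hB.symm
  have hvv : ⟪v, v⟫ = (randersNorm B v - ⟪v, B⟫) ^ 2 := by
    rw [randersNorm, add_sub_cancel_right, Real.sq_sqrt real_inner_self_nonneg]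
  rw [zermeloInner, zermeloWind, sub_neg_eq_add]
  simp only [inner_add_left, inner_add_right, real_inner_smul_left, real_inner_smul_right]
  rw [real_inner_comm v B, hvv]
  field_simp
  ring

end

theorem randers_gives_zermelo_data_general {V : Type*} [NormedAddCommGroup V] [InnerProductSpace ℝ V]
    (B : V) (hB : ⟪B, B⟫ < 1)
    (h : V → V → ℝ)
    (hdef : ∀ w u : V, h w u = (1 - ⟪B, B⟫) * (⟪w, u⟫ - ⟪B, w⟫ * ⟪B, u⟫))
    (W : V) (hWdef : W = -((1 - ⟪B, B⟫)⁻¹ • B))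
    (Z : V → ℝ) (hZdef : ∀ v : V, Z v = Real.sqrt ⟪v, v⟫ + ⟪v, B⟫) :
    (∀ v : V, v ≠ 0 → 0 < h v v) ∧ h W W < 1 ∧
      ∀ v : V, v ≠ 0 → h ((Z v)⁻¹ • v - W) ((Z v)⁻¹ • v - W) = 1 := by
  obtain rfl : h = zermeloInner B := funext₂ hdef
  obtain rfl : W = zermeloWind B := hWdef
  obtain rfl : Z = randersNorm B := funext hZdef
  have hB' : ‖B‖ < 1 := by
    rwa [real_inner_self_eq_norm_sq, sq_lt_one_iff₀ (norm_nonneg B)] at hB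
  exact ⟨fun v hv => zermeloInner_self_pos hB' hv, (zermeloInner_wind_wind hB.ne).trans_lt hB,
    fun v hv => zermeloInner_inv_randersNorm_smul_sub_wind hB.ne (randersNorm_pos hB' hv).ne'⟩

/-- From a Randers norm `Z(v) = √(a(v,v)) + a(v,B)` (with `a` the inner product of the space
and `a(B,B) < 1`), the formulas `h(w,u) = μ(a(w,u) − a(B,w)a(B,u))`, `W = −B/μ`,
`μ = 1 − a(B,B)` give a positive-definite inner product `h` with `h(W,W) < 1` such that
`Z` solves the Zermelo equation for the data `(h, W)`. -/
theorem randers_gives_zermelo_data {V : Type*} [NormedAddCommGroup V] [InnerProductSpace ℝ V]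
    [FiniteDimensional ℝ V] (B : V) (hB : ⟪B, B⟫ < 1)
    (h : V → V → ℝ)
    (hdef : ∀ w u : V, h w u = (1 - ⟪B, B⟫) * (⟪w, u⟫ - ⟪B, w⟫ * ⟪B, u⟫))
    (W : V) (hWdef : W = -((1 - ⟪B, B⟫)⁻¹ • B))
    (Z : V → ℝ) (hZdef : ∀ v : V, Z v = Real.sqrt ⟪v, v⟫ + ⟪v, B⟫) :
    (∀ v : V, v ≠ 0 → 0 < h v v) ∧ h W W < 1 ∧
      ∀ v : V, v ≠ 0 → h ((Z v)⁻¹ • v - W) ((Z v)⁻¹ • v - W) = 1 :=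
  randers_gives_zermelo_data_general B hB h hdef W hWdef Z hZdef
end

section
/- A Randers norm Z(v) = √(a(v,v)) + β(v) on a finite-dimensional real vector space V, where a is an inner product and β is a linear form with a-norm strictly less than 1, is a Minkowski norm: Z is smooth away from 0, positively 1-homogeneous, and its fundamental tensor is positive definite at every v ≠ 0. -/
/-- The fundamental tensor of a function `F`:
`g_v(u,w) = (1/2) ∂²/∂t∂s F²(v+tu+sw)|_{t=s=0}`. -/
noncomputable def fundTensor {V : Type*} [NormedAddCommGroup V] [NormedSpace ℝ V]
    (F : V → ℝ) (v u w : V) : ℝ :=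
  (1 / 2) * deriv (fun t : ℝ => deriv (fun s : ℝ => (F (v + t • u + s • w)) ^ 2) 0) 0

/-- A Minkowski norm on a real vector space. -/
structure IsMinkowskiNorm {V : Type*} [NormedAddCommGroup V] [NormedSpace ℝ V]
    (F : V → ℝ) : Prop where
  nonneg : ∀ v, 0 ≤ F v
  smooth : ContDiffOn ℝ (⊤ : ℕ∞) F {(0 : V)}ᶜ
  homog : ∀ l : ℝ, 0 < l → ∀ v, F (l • v) = l * F v
  symm : ∀ v : V, v ≠ 0 → ∀ u w, fundTensor F v u w = fundTensor F v w u
  posdef : ∀ v : V, v ≠ 0 → ∀ u : V, u ≠ 0 → 0 < fundTensor F v u u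

open scoped RealInnerProductSpace

section Aux

variable {V : Type*} [NormedAddCommGroup V] [InnerProductSpace ℝ V]

lemma sqrt_inner_self' (x : V) : Real.sqrt ⟪x, x⟫ = ‖x‖ := by
  rw [real_inner_self_eq_norm_mul_norm, Real.sqrt_mul_self (norm_nonneg x)]

lemma inner_self_pos' {x : V} (hx : x ≠ 0) : (0 : ℝ) < ⟪x, x⟫ :=
  lt_of_le_of_ne real_inner_self_nonneg
    (fun h => hx ((inner_self_eq_zero (𝕜 := ℝ)).1 h.symm))

lemma inner_self_expand (x w : V) (s : ℝ) :
    ⟪x + s • w, x + s • w⟫ = ⟪x, x⟫ + 2 * s * ⟪x, w⟫ + s ^ 2 * ⟪w, w⟫ := by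
  simp only [inner_add_left, inner_add_right, real_inner_smul_left, real_inner_smul_right,
    real_inner_comm w x]
  ring

lemma hasDerivAt_inner_right (x y w : V) :
    HasDerivAt (fun s : ℝ => ⟪x + s • w, y⟫) ⟪w, y⟫ 0 := by
  have h : HasDerivAt (fun s : ℝ => ⟪x, y⟫ + s * ⟪w, y⟫) ⟪w, y⟫ 0 := by
    simpa using ((hasDerivAt_id (0 : ℝ)).mul_const ⟪w, y⟫).const_add ⟪x, y⟫
  refine h.congr_of_eventuallyEq (Filter.Eventually.of_forall fun s => ?_)
  simp [inner_add_left, real_inner_smul_left]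

lemma hasDerivAt_inner_self (x w : V) :
    HasDerivAt (fun s : ℝ => ⟪x + s • w, x + s • w⟫) (2 * ⟪x, w⟫) 0 := by
  have h : HasDerivAt (fun s : ℝ => ⟪x, x⟫ + 2 * s * ⟪x, w⟫ + s ^ 2 * ⟪w, w⟫)
      (2 * ⟪x, w⟫) 0 := by
    have h1 : HasDerivAt (fun s : ℝ => 2 * s * ⟪x, w⟫) (2 * ⟪x, w⟫) 0 := by
      simpa using ((hasDerivAt_id (0 : ℝ)).const_mul 2).mul_const ⟪x, w⟫
    have h2 : HasDerivAt (fun s : ℝ => s ^ 2 * ⟪w, w⟫) 0 0 := by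
      simpa using (hasDerivAt_pow 2 (0 : ℝ)).mul_const ⟪w, w⟫
    have h3 := (h1.const_add ⟪x, x⟫).add h2
    rw [add_zero] at h3
    exact h3
  exact h.congr_of_eventuallyEq (Filter.Eventually.of_forall fun s => inner_self_expand x w s)

lemma hasDerivAt_norm_line (x w : V) (hx : x ≠ 0) :
    HasDerivAt (fun s : ℝ => ‖x + s • w‖) (⟪x, w⟫ / ‖x‖) 0 := by
  have hx2 : (0 : ℝ) < ⟪x, x⟫ := inner_self_pos' hx
  have h := (hasDerivAt_inner_self x w).sqrt (by simpa using hx2.ne')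
  have hval : (2 * ⟪x, w⟫) / (2 * Real.sqrt ⟪x + (0:ℝ) • w, x + (0:ℝ) • w⟫)
      = ⟪x, w⟫ / ‖x‖ := by
    have : x + (0:ℝ) • w = x := by simp
    rw [this, sqrt_inner_self', mul_div_mul_left _ _ (two_ne_zero)]
  rw [hval] at h
  exact h.congr_of_eventuallyEq
    (Filter.Eventually.of_forall fun s => (sqrt_inner_self' _).symm)

/-- The explicit fundamental tensor of the Randers norm. -/
noncomputable def gform (B v u w : V) : ℝ :=
  ⟪u, w⟫ + (⟪u, w⟫ * ⟪v, B⟫ + ⟪v, w⟫ * ⟪u, B⟫ + ⟪v, u⟫ * ⟪w, B⟫) / ‖v‖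
    - ⟪v, B⟫ * ⟪v, u⟫ * ⟪v, w⟫ / ‖v‖ ^ 3 + ⟪u, B⟫ * ⟪w, B⟫

lemma hasDerivAt_inner_F2 (B x w : V) (hx : x ≠ 0) :
    HasDerivAt (fun s : ℝ => (Real.sqrt ⟪x + s • w, x + s • w⟫ + ⟪x + s • w, B⟫) ^ 2)
      (2 * (‖x‖ + ⟪x, B⟫) * (⟪x, w⟫ / ‖x‖ + ⟪w, B⟫)) 0 := by
  have hN := hasDerivAt_norm_line x w hx
  have hψ := hasDerivAt_inner_right x B w
  have h := (hN.add hψ).pow 2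
  have hpt : x + (0:ℝ) • w = x := by simp
  rw [Pi.add_apply] at h
  beta_reduce at h
  rw [hpt] at h
  have hval : ((2 : ℕ) : ℝ) * (‖x‖ + ⟪x, B⟫) ^ (2 - 1) * (⟪x, w⟫ / ‖x‖ + ⟪w, B⟫)
      = 2 * (‖x‖ + ⟪x, B⟫) * (⟪x, w⟫ / ‖x‖ + ⟪w, B⟫) := by norm_num
  rw [hval] at h
  refine h.congr_of_eventuallyEq (Filter.Eventually.of_forall fun s => ?_)
  simp only [sqrt_inner_self', Pi.pow_apply, Pi.add_apply]

lemma hasDerivAt_outer (B v u w : V) (hv : v ≠ 0) :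
    HasDerivAt (fun t : ℝ =>
        2 * (‖v + t • u‖ + ⟪v + t • u, B⟫) * (⟪v + t • u, w⟫ / ‖v + t • u‖ + ⟪w, B⟫))
      (2 * gform B v u w) 0 := by
  have hα : (0 : ℝ) < ‖v‖ := norm_pos_iff.2 hv
  have hN := hasDerivAt_norm_line v u hv
  have hM := hasDerivAt_inner_right v B u
  have hA := hasDerivAt_inner_right v w u
  have hpt : v + (0:ℝ) • u = v := by simp
  have hNv : ‖v + (0:ℝ) • u‖ ≠ 0 := by rw [hpt]; exact hα.ne'
  have h := (((hN.add hM).const_mul 2).mul ((hA.div hN hNv).add_const ⟪w, B⟫))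
  simp only [Pi.add_apply, Pi.div_apply] at h
  rw [hpt] at h
  refine h.congr_deriv ?_
  unfold gform
  field_simp
  ring

lemma fundTensor_randers (B v u w : V) (hv : v ≠ 0) :
    fundTensor (fun v : V => Real.sqrt ⟪v, v⟫ + ⟪v, B⟫) v u w = gform B v u w := by
  unfold fundTensor
  have hcont : ContinuousAt (fun t : ℝ => v + t • u) 0 := by fun_prop
  have hne : ∀ᶠ t : ℝ in nhds 0, v + t • u ≠ 0 :=
    hcont.eventually_ne (by simpa using hv)
  have hev : (fun t : ℝ => deriv
        (fun s : ℝ => (Real.sqrt ⟪v + t • u + s • w, v + t • u + s • w⟫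
          + ⟪v + t • u + s • w, B⟫) ^ 2) 0)
      =ᶠ[nhds 0] fun t : ℝ =>
        2 * (‖v + t • u‖ + ⟪v + t • u, B⟫) * (⟪v + t • u, w⟫ / ‖v + t • u‖ + ⟪w, B⟫) := by
    filter_upwards [hne] with t ht
    exact (hasDerivAt_inner_F2 B (v + t • u) w ht).deriv
  rw [hev.deriv_eq, (hasDerivAt_outer B v u w hv).deriv]
  ring

end Aux

/-- A Randers norm `Z(v) = √(a(v,v)) + β(v)` with `‖β‖_a < 1` (here `a` is the inner product
of the space and `β(v) = a(v,B)` with `a(B,B) < 1`) is a Minkowski norm. -/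
theorem randers_isMinkowskiNorm {V : Type*} [NormedAddCommGroup V] [InnerProductSpace ℝ V]
    [FiniteDimensional ℝ V] (B : V) (hB : ⟪B, B⟫ < 1) :
    IsMinkowskiNorm (fun v : V => Real.sqrt ⟪v, v⟫ + ⟪v, B⟫) := by
  have hBn : ‖B‖ < 1 := by
    nlinarith [real_inner_self_eq_norm_mul_norm B, norm_nonneg B]
  constructor
  · intro v
    rw [sqrt_inner_self']
    have h1 := abs_real_inner_le_norm v B
    have h2 : |⟪v, B⟫| ≤ ‖v‖ := by nlinarith [norm_nonneg v]
    have := neg_abs_le ⟪v, B⟫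
    linarith
  · have hC : ContDiffOn ℝ (⊤ : ℕ∞) (fun v : V => ‖v‖ + ⟪v, B⟫) {(0 : V)}ᶜ := by
      intro x hx
      have hx0 : x ≠ 0 := hx
      exact ((contDiffAt_norm ℝ hx0).add
        ((contDiff_id.inner ℝ contDiff_const).contDiffAt)).contDiffWithinAt
    exact hC.congr fun x _ => by rw [sqrt_inner_self']
  · intro l hl v
    simp only [real_inner_smul_left, real_inner_smul_right]
    rw [show l * (l * ⟪v, v⟫) = l ^ 2 * ⟪v, v⟫ by ring,
      Real.sqrt_mul (sq_nonneg l), Real.sqrt_sq hl.le]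
    ring
  · intro v hv u w
    rw [fundTensor_randers B v u w hv, fundTensor_randers B v w u hv]
    unfold gform
    rw [real_inner_comm u w]
    ring
  · intro v hv u hu
    rw [fundTensor_randers B v u u hv]
    have hα : (0 : ℝ) < ‖v‖ := norm_pos_iff.2 hv
    have hvv : ⟪v, v⟫ = ‖v‖ ^ 2 := real_inner_self_eq_norm_sq v
    have hβ : |⟪v, B⟫| ≤ ‖v‖ * ‖B‖ := abs_real_inner_le_norm v B
    have hαβ : 0 < ‖v‖ + ⟪v, B⟫ := by
      have := neg_abs_le ⟪v, B⟫
      nlinarith [norm_nonneg B]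
    set c : ℝ := ⟪v, u⟫ / ‖v‖ ^ 2 with hc
    set z : V := u - c • v with hzdef
    have hvz : ⟪v, z⟫ = 0 := by
      rw [hzdef, inner_sub_right, real_inner_smul_right, hvv, hc]
      field_simp
      ring
    have hu_eq : u = c • v + z := by rw [hzdef]; abel
    have hvu : ⟪v, u⟫ = c * ‖v‖ ^ 2 := by rw [hc]; field_simp
    have huu : ⟪u, u⟫ = c ^ 2 * ‖v‖ ^ 2 + ⟪z, z⟫ := by
      rw [hu_eq]
      simp only [inner_add_left, inner_add_right, real_inner_smul_left, real_inner_smul_right,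
        hvv, hvz]
      have hzv : ⟪z, v⟫ = (0 : ℝ) := by rw [real_inner_comm]; exact hvz
      rw [hzv]
      ring
    have huB : ⟪u, B⟫ = c * ⟪v, B⟫ + ⟪z, B⟫ := by
      rw [hu_eq]
      simp only [inner_add_left, real_inner_smul_left]
    have key : gform B v u u = ((‖v‖ + ⟪v, B⟫) / ‖v‖) * ⟪z, z⟫
        + (c * (‖v‖ + ⟪v, B⟫) + ⟪z, B⟫) ^ 2 := by
      unfold gform
      rw [huu, hvu, huB]
      field_simp
      ring
    rw [key]
    rcases eq_or_ne z 0 with hz | hz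
    · have hcz : c ≠ 0 := by
        intro h0
        apply hu
        rw [hu_eq, h0, hz, zero_smul, zero_add]
      have hzz : ⟪z, z⟫ = (0 : ℝ) := by rw [hz]; simp
      have hzB : ⟪z, B⟫ = (0 : ℝ) := by rw [hz]; simp
      rw [hzz, hzB]
      have : c * (‖v‖ + ⟪v, B⟫) ≠ 0 := mul_ne_zero hcz hαβ.ne'
      have h2 : 0 < (c * (‖v‖ + ⟪v, B⟫) + 0) ^ 2 := by
        rw [add_zero]
        positivity
      nlinarith
    · have hzz : (0 : ℝ) < ⟪z, z⟫ := inner_self_pos' hz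
      have h1 : 0 < ((‖v‖ + ⟪v, B⟫) / ‖v‖) * ⟪z, z⟫ := by positivity
      nlinarith [sq_nonneg (c * (‖v‖ + ⟪v, B⟫) + ⟪z, B⟫)]
end

section
/- Let Z = α + β be a Randers norm with α(v) = √(a(v,v)), and let (h,W) be its Zermelo data with μ = 1 − a(B,B) where β(·) = a(·,B). Then for all v ≠ 0 and all u, the fundamental tensor satisfies g_v(v,u) = Z(v)(a(u,v)/α(v) + β(u)) = (Z(v)/(μ α(v))) h(v − Z(v)W, u). -/
open scoped RealInnerProductSpace

private lemma inner_self_pos'_s7 {V : Type*} [NormedAddCommGroup V] [InnerProductSpace ℝ V]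
    {v : V} (h : v ≠ 0) : (0:ℝ) < ⟪v, v⟫ := by
  rw [real_inner_self_eq_norm_sq]
  have : 0 < ‖v‖ := norm_pos_iff.mpr h
  positivity

private lemma randers_inner_deriv {V : Type*} [NormedAddCommGroup V] [InnerProductSpace ℝ V]
    (B x u : V) (hx : x ≠ 0) :
    deriv (fun s : ℝ => (Real.sqrt ⟪x + s • u, x + s • u⟫ + ⟪x + s • u, B⟫) ^ 2) 0
      = 2 * (Real.sqrt ⟪x, x⟫ + ⟪x, B⟫) * (⟪x, u⟫ / Real.sqrt ⟪x, x⟫ + ⟪u, B⟫) := by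
  have hxx : (0:ℝ) < ⟪x, x⟫ := inner_self_pos'_s7 hx
  have h1 : HasDerivAt (fun s : ℝ => ⟪x + s • u, x + s • u⟫) (2 * ⟪x, u⟫) 0 := by
    have e : (fun s : ℝ => ⟪x + s • u, x + s • u⟫)
        = fun s : ℝ => ⟪x, x⟫ + (2 * ⟪x, u⟫ * s + ⟪u, u⟫ * s ^ 2) := by
      funext s
      simp only [inner_add_left, inner_add_right, real_inner_smul_left, real_inner_smul_right,
        real_inner_comm u x]
      ring
    rw [e]
    have h2 := ((hasDerivAt_id (0:ℝ)).const_mul (2 * ⟪x, u⟫)).add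
      ((hasDerivAt_pow 2 (0:ℝ)).const_mul ⟪u, u⟫)
    have h3 := (hasDerivAt_const (0:ℝ) ⟪x, x⟫).add h2
    exact h3.congr_deriv (by simp)
  have h2 : HasDerivAt (fun s : ℝ => ⟪x + s • u, B⟫) ⟪u, B⟫ 0 := by
    have e : (fun s : ℝ => ⟪x + s • u, B⟫) = fun s : ℝ => ⟪x, B⟫ + ⟪u, B⟫ * s := by
      funext s
      simp only [inner_add_left, real_inner_smul_left]
      ring
    rw [e]
    exact ((hasDerivAt_const (0:ℝ) ⟪x, B⟫).add ((hasDerivAt_id (0:ℝ)).const_mul ⟪u, B⟫)).congr_deriv (by simp)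
  have h3 : HasDerivAt (fun s : ℝ => Real.sqrt ⟪x + s • u, x + s • u⟫)
      (2 * ⟪x, u⟫ / (2 * Real.sqrt ⟪x, x⟫)) 0 := by
    have := h1.sqrt (by simpa using hxx.ne')
    simpa using this
  have h4 : HasDerivAt (fun s : ℝ => (Real.sqrt ⟪x + s • u, x + s • u⟫ + ⟪x + s • u, B⟫) ^ 2) _ 0 :=
    (h3.add h2).pow 2
  have := h4.deriv
  rw [this]
  have hs : Real.sqrt ⟪x, x⟫ ≠ 0 := (Real.sqrt_pos.mpr hxx).ne'
  simp only [zero_smul, add_zero, pow_one, Pi.add_apply, Nat.cast_ofNat]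
  field_simp
  ring


/-- For a Randers norm `Z = α + β` with Zermelo data `(h, W)`,
`g_v(v,u) = Z(v)(a(u,v)/α(v) + β(u)) = (Z(v)/(μ α(v))) h(v − Z(v)W, u)`. -/
theorem randers_fundTensor_self {V : Type*} [NormedAddCommGroup V] [InnerProductSpace ℝ V]
    [FiniteDimensional ℝ V] (B : V) (hB : ⟪B, B⟫ < 1)
    (Z : V → ℝ) (hZdef : ∀ v : V, Z v = Real.sqrt ⟪v, v⟫ + ⟪v, B⟫)
    (μ : ℝ) (hμ : μ = 1 - ⟪B, B⟫)
    (h : V → V → ℝ) (hdef : ∀ w u : V, h w u = μ * (⟪w, u⟫ - ⟪B, w⟫ * ⟪B, u⟫))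
    (W : V) (hWdef : W = -(μ⁻¹ • B))
    (v : V) (hv : v ≠ 0) (u : V) :
    fundTensor Z v v u = Z v * (⟪u, v⟫ / Real.sqrt ⟪v, v⟫ + ⟪u, B⟫) ∧
      fundTensor Z v v u = (Z v / (μ * Real.sqrt ⟪v, v⟫)) * h (v - Z v • W) u := by
  have hvv : (0:ℝ) < ⟪v, v⟫ := inner_self_pos'_s7 hv
  set α := Real.sqrt ⟪v, v⟫ with hα
  have hαpos : 0 < α := Real.sqrt_pos.mpr hvv
  have hμpos : 0 < μ := by rw [hμ]; linarith
  set C : ℝ := (α + ⟪v, B⟫) * (⟪v, u⟫ / α + ⟪u, B⟫) with hC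
  have key : fundTensor Z v v u = C := by
    unfold fundTensor
    have heq : (fun t : ℝ => deriv (fun s : ℝ => (Z (v + t • v + s • u)) ^ 2) 0)
        =ᶠ[nhds (0:ℝ)] fun t : ℝ => 2 * (1 + t) * C := by
      filter_upwards [Ioi_mem_nhds (show (-1:ℝ) < 0 by norm_num)] with t ht
      have ht' : (0:ℝ) < 1 + t := by have : (-1:ℝ) < t := ht; linarith
      have hx : v + t • v = (1 + t) • v := by
        rw [add_smul, one_smul]
      have hxne : (1 + t) • v ≠ 0 := smul_ne_zero ht'.ne' hv
      have := randers_inner_deriv B ((1 + t) • v) u hxne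
      simp only [hZdef, hx]
      rw [this]
      have e1 : ⟪(1 + t) • v, (1 + t) • v⟫ = (1 + t) ^ 2 * ⟪v, v⟫ := by
        simp only [real_inner_smul_left, real_inner_smul_right]; ring
      have e2 : Real.sqrt ⟪(1 + t) • v, (1 + t) • v⟫ = (1 + t) * α := by
        rw [e1, Real.sqrt_mul (sq_nonneg _), Real.sqrt_sq ht'.le, hα]
      have e3 : ⟪(1 + t) • v, B⟫ = (1 + t) * ⟪v, B⟫ := real_inner_smul_left _ _ _
      have e4 : ⟪(1 + t) • v, u⟫ = (1 + t) * ⟪v, u⟫ := real_inner_smul_left _ _ _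
      rw [e2, e3, e4, hC]
      rw [mul_div_mul_left _ _ ht'.ne']
      ring
    rw [heq.deriv_eq]
    have hd : HasDerivAt (fun t : ℝ => 2 * (1 + t) * C) (2 * C) 0 := by
      simpa using (((hasDerivAt_id (0:ℝ)).const_add 1).const_mul 2).mul_const C
    rw [hd.deriv]
    ring
  constructor
  · rw [key, hZdef, hC, real_inner_comm u v]
  · rw [key, hdef, hWdef, hZdef]
    have e : v - (α + ⟪v, B⟫) • -(μ⁻¹ • B) = v + ((α + ⟪v, B⟫) * μ⁻¹) • B := by
      rw [smul_neg, sub_neg_eq_add, smul_smul]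
    rw [e]
    simp only [inner_add_left, inner_add_right, real_inner_smul_left, real_inner_smul_right,
      real_inner_comm B v]
    rw [hμ]
    have hμne : (1:ℝ) - ⟪B, B⟫ ≠ 0 := by linarith
    have hαne : α ≠ 0 := hαpos.ne'
    rw [hC, real_inner_comm v B, real_inner_comm u B, ← hα]
    field_simp
    ring
end

section
/- Let (V, F) be a Minkowski space and W ⊂ V a linear subspace. Let ν₀(W) = {v ∈ V \ {0} : g_v(v,w) = 0 for all w ∈ W} be the set of nonzero vectors F-orthogonal to W. Then ν₀(W) is a smooth submanifold of V, and its tangent space at v ∈ ν₀(W) is T_v ν₀(W) = {u ∈ V : g_v(u,w) = 0 for all w ∈ W}. -/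
open Filter Topology Set Asymptotics

section Aux

variable {V : Type*} [NormedAddCommGroup V] [NormedSpace ℝ V]

private lemma hasDerivAt_comp_line {E : Type*} [NormedAddCommGroup E] [NormedSpace ℝ E]
    {g : V → E} {D : V →L[ℝ] E} {x : V} (hd : HasFDerivAt g D x) (u : V) :
    HasDerivAt (fun t : ℝ => g (x + t • u)) (D u) 0 := by
  have hl : HasDerivAt (fun t : ℝ => x + t • u) u 0 := by
    simpa using ((hasDerivAt_id (0 : ℝ)).smul_const u).const_add x
  have hd' : HasFDerivAt g D ((fun t : ℝ => x + t • u) 0) := by simpa using hd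
  exact hd'.comp_hasDerivAt 0 hl

/-- The second derivative formula for the fundamental tensor. -/
private lemma deriv_deriv_eq (φ : V → ℝ) (hφ : ContDiffOn ℝ (⊤ : ℕ∞) φ {(0 : V)}ᶜ)
    {x : V} (hx : x ≠ 0) (u w : V) :
    deriv (fun t : ℝ => deriv (fun s : ℝ => φ (x + t • u + s • w)) 0) 0
      = fderiv ℝ (fderiv ℝ φ) x u w := by
  have hop : IsOpen ({(0 : V)}ᶜ) := isOpen_compl_singleton
  have hφat : ∀ y : V, y ≠ 0 → ContDiffAt ℝ (⊤ : ℕ∞) φ y := fun y hy =>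
    hφ.contDiffAt (hop.mem_nhds hy)
  have hGat : ContDiffAt ℝ (⊤ : ℕ∞) (fderiv ℝ φ) x := (hφat x hx).fderiv_right (by simp)
  have hne : ∀ᶠ t : ℝ in 𝓝 0, x + t • u ≠ 0 := by
    have hc : ContinuousAt (fun t : ℝ => x + t • u) 0 := by fun_prop
    have h0 : ({(0 : V)}ᶜ) ∈ 𝓝 ((fun t : ℝ => x + t • u) 0) := by
      apply hop.mem_nhds; simpa using hx
    exact hc.eventually_mem h0
  have hinner : ∀ t : ℝ, x + t • u ≠ 0 →
      deriv (fun s : ℝ => φ (x + t • u + s • w)) 0 = fderiv ℝ φ (x + t • u) w := by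
    intro t ht
    have hd : HasFDerivAt φ (fderiv ℝ φ (x + t • u)) (x + t • u) :=
      ((hφat _ ht).differentiableAt (by simp)).hasFDerivAt
    exact (hasDerivAt_comp_line hd w).deriv
  have heq : (fun t : ℝ => deriv (fun s : ℝ => φ (x + t • u + s • w)) 0)
      =ᶠ[𝓝 (0 : ℝ)] (fun t : ℝ => fderiv ℝ φ (x + t • u) w) := hne.mono hinner
  have hdG : HasFDerivAt (fderiv ℝ φ) (fderiv ℝ (fderiv ℝ φ) x) x :=
    (hGat.differentiableAt (by simp)).hasFDerivAt
  have h2 : HasDerivAt (fun t : ℝ => fderiv ℝ φ (x + t • u)) (fderiv ℝ (fderiv ℝ φ) x u) 0 :=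
    hasDerivAt_comp_line hdG u
  have h3 : HasDerivAt (fun t : ℝ => fderiv ℝ φ (x + t • u) w)
      (fderiv ℝ (fderiv ℝ φ) x u w) 0 := by
    simpa using h2.clm_apply (hasDerivAt_const (0 : ℝ) w)
  rw [heq.deriv_eq, h3.deriv]

/-- Euler's theorem: for a positively `2`-homogeneous function, the second derivative
contracted with the base point gives back the first derivative. -/
private lemma euler (φ : V → ℝ) (hφ : ContDiffOn ℝ (⊤ : ℕ∞) φ {(0 : V)}ᶜ)
    (hhom : ∀ l : ℝ, 0 < l → ∀ y, φ (l • y) = l ^ 2 * φ y)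
    {x : V} (hx : x ≠ 0) :
    fderiv ℝ (fderiv ℝ φ) x x = fderiv ℝ φ x := by
  have hop : IsOpen ({(0 : V)}ᶜ) := isOpen_compl_singleton
  have hφat : ∀ y : V, y ≠ 0 → ContDiffAt ℝ (⊤ : ℕ∞) φ y := fun y hy =>
    hφ.contDiffAt (hop.mem_nhds hy)
  -- homogeneity of the first derivative
  have hG : ∀ l : ℝ, 0 < l → ∀ y : V, y ≠ 0 →
      fderiv ℝ φ (l • y) = l • fderiv ℝ φ y := by
    intro l hl y hy
    have hly : l • y ≠ 0 := smul_ne_zero (ne_of_gt hl) hy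
    have hd1 : HasFDerivAt φ (fderiv ℝ φ (l • y)) (l • y) :=
      ((hφat _ hly).differentiableAt (by simp)).hasFDerivAt
    have hd2 : HasFDerivAt φ (fderiv ℝ φ y) y :=
      ((hφat _ hy).differentiableAt (by simp)).hasFDerivAt
    have hlin : HasFDerivAt (fun z : V => l • z) (l • ContinuousLinearMap.id ℝ V) y :=
      (l • ContinuousLinearMap.id ℝ V).hasFDerivAt
    have hcomp : HasFDerivAt (fun z : V => φ (l • z))
        ((fderiv ℝ φ (l • y)).comp (l • ContinuousLinearMap.id ℝ V)) y :=
      HasFDerivAt.comp y hd1 hlin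
    have hcomp' : HasFDerivAt (fun z : V => l ^ 2 * φ z)
        ((fderiv ℝ φ (l • y)).comp (l • ContinuousLinearMap.id ℝ V)) y := by
      have : (fun z : V => φ (l • z)) = fun z : V => l ^ 2 * φ z :=
        funext fun z => hhom l hl z
      rwa [this] at hcomp
    have hcomp'' : HasFDerivAt (fun z : V => l ^ 2 * φ z) (l ^ 2 • fderiv ℝ φ y) y :=
      hd2.const_mul (l ^ 2)
    have hEq : (fderiv ℝ φ (l • y)).comp (l • ContinuousLinearMap.id ℝ V)
        = l ^ 2 • fderiv ℝ φ y := hcomp'.unique hcomp''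
    have hEq2 : l • fderiv ℝ φ (l • y) = l ^ 2 • fderiv ℝ φ y := by
      rw [← hEq]; ext z
      simp [mul_comm]
    have := congrArg (fun A => l⁻¹ • A) hEq2
    simpa [smul_smul, inv_mul_cancel₀ (ne_of_gt hl), pow_two, ← mul_assoc] using this
  have hGat : ContDiffAt ℝ (⊤ : ℕ∞) (fderiv ℝ φ) x := (hφat x hx).fderiv_right (by simp)
  have hdG : HasFDerivAt (fderiv ℝ φ) (fderiv ℝ (fderiv ℝ φ) x) x :=
    (hGat.differentiableAt (by simp)).hasFDerivAt
  have h1 : HasDerivAt (fun t : ℝ => fderiv ℝ φ (x + t • x))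
      (fderiv ℝ (fderiv ℝ φ) x x) 0 := hasDerivAt_comp_line hdG x
  have h2 : HasDerivAt (fun t : ℝ => fderiv ℝ φ x + t • fderiv ℝ φ x) (fderiv ℝ φ x) 0 := by
    simpa using ((hasDerivAt_id (0 : ℝ)).smul_const (fderiv ℝ φ x)).const_add (fderiv ℝ φ x)
  have heq : (fun t : ℝ => fderiv ℝ φ (x + t • x))
      =ᶠ[𝓝 (0 : ℝ)] (fun t : ℝ => fderiv ℝ φ x + t • fderiv ℝ φ x) := by
    have hpos : ∀ᶠ t : ℝ in 𝓝 0, 0 < 1 + t := by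
      have : ContinuousAt (fun t : ℝ => 1 + t) 0 := by fun_prop
      have h0 : Set.Ioi (0 : ℝ) ∈ 𝓝 ((fun t : ℝ => 1 + t) 0) := by
        apply isOpen_Ioi.mem_nhds; norm_num
      exact this.eventually_mem h0
    filter_upwards [hpos] with t ht
    have hxt : x + t • x = (1 + t) • x := by rw [add_smul, one_smul]
    rw [hxt, hG _ ht x hx, add_smul, one_smul]
  exact h1.unique (h2.congr_of_eventuallyEq heq)

private lemma tangentCone_singleton_zero {E : Type*} [NormedAddCommGroup E] [NormedSpace ℝ E]
    {y : E} (hy : y ∈ tangentConeAt ℝ ({0} : Set E) 0) : y = 0 := by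
  obtain ⟨c, d, _, hd, hcd⟩ := mem_tangentConeAt_iff_exists_seq_norm_tendsto_atTop.1 hy
  have hd0 : ∀ᶠ n in atTop, c n • d n = 0 := by
    filter_upwards [hd] with n hn
    have : d n = 0 := by simpa using hn
    simp [this]
  have hd0' : (fun n => c n • d n) =ᶠ[atTop] (fun _ => (0 : E)) := hd0
  have h0 : Tendsto (fun n => c n • d n) atTop (𝓝 (0 : E)) :=
    Tendsto.congr' hd0'.symm tendsto_const_nhds
  exact tendsto_nhds_unique hcd h0

end Aux

section Key

variable {V : Type*} [NormedAddCommGroup V] [NormedSpace ℝ V] {F : V → ℝ}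

private lemma fundTensor_eq (hF : IsMinkowskiNorm F) {x : V} (hx : x ≠ 0) (u w : V) :
    fundTensor F x u w = (1 / 2) * fderiv ℝ (fderiv ℝ (fun y => F y ^ 2)) x u w := by
  have hφ : ContDiffOn ℝ (⊤ : ℕ∞) (fun y => F y ^ 2) {(0 : V)}ᶜ := hF.smooth.pow 2
  have := deriv_deriv_eq (fun y => F y ^ 2) hφ hx u w
  unfold fundTensor
  rw [← this]

private lemma fundTensor_self_eq (hF : IsMinkowskiNorm F) {x : V} (hx : x ≠ 0) (w : V) :
    fundTensor F x x w = (1 / 2) * fderiv ℝ (fun y => F y ^ 2) x w := by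
  have hφ : ContDiffOn ℝ (⊤ : ℕ∞) (fun y => F y ^ 2) {(0 : V)}ᶜ := hF.smooth.pow 2
  have hhom : ∀ l : ℝ, 0 < l → ∀ y, (fun y => F y ^ 2) (l • y) = l ^ 2 * (fun y => F y ^ 2) y := by
    intro l hl y
    simp only
    rw [hF.homog l hl y]; ring
  rw [fundTensor_eq hF hx, euler (fun y => F y ^ 2) hφ hhom hx]

end Key

set_option synthInstance.maxHeartbeats 1000000 in
set_option maxHeartbeats 4000000 in
/-- For a Minkowski space `(V,F)` and a linear subspace `W`, the set `ν₀(W)` of nonzero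
vectors `F`-orthogonal to `W` is a smooth submanifold of `V` (locally it is the zero set of a
smooth submersion into the dual of `W`), and its tangent space at `v` is
`{u : g_v(u,w) = 0 for all w ∈ W}`. -/
theorem orthogonalCone_submanifold {V : Type*} [NormedAddCommGroup V] [NormedSpace ℝ V]
    [FiniteDimensional ℝ V] (F : V → ℝ) (hF : IsMinkowskiNorm F) (W : Submodule ℝ V) :
    ∀ v ∈ {v : V | v ≠ 0 ∧ ∀ w ∈ W, fundTensor F v v w = 0},
      (∃ (f : V → (W →L[ℝ] ℝ)) (U : Set V), IsOpen U ∧ v ∈ U ∧ ContDiffOn ℝ (⊤ : ℕ∞) f U ∧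
        {v : V | v ≠ 0 ∧ ∀ w ∈ W, fundTensor F v v w = 0} ∩ U = {x ∈ U | f x = 0} ∧
        ∃ f' : V →L[ℝ] (W →L[ℝ] ℝ), HasFDerivAt f f' v ∧ Function.Surjective f') ∧
      tangentConeAt ℝ {v : V | v ≠ 0 ∧ ∀ w ∈ W, fundTensor F v v w = 0} v =
        {u : V | ∀ w ∈ W, fundTensor F v u w = 0} := by
  rintro v ⟨hv, hvW⟩
  haveI : CompleteSpace V := FiniteDimensional.complete ℝ V
  set S : Set V := {v : V | v ≠ 0 ∧ ∀ w ∈ W, fundTensor F v v w = 0} with hSdef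
  set φ : V → ℝ := fun y => F y ^ 2 with hφdef
  have hφ : ContDiffOn ℝ (⊤ : ℕ∞) φ {(0 : V)}ᶜ := hF.smooth.pow 2
  have hop : IsOpen ({(0 : V)}ᶜ) := isOpen_compl_singleton
  set G : V → (V →L[ℝ] ℝ) := fderiv ℝ φ with hGdef
  set B : V → (V →L[ℝ] (V →L[ℝ] ℝ)) := fderiv ℝ (fderiv ℝ φ) with hBdef
  set P : (V →L[ℝ] ℝ) →L[ℝ] (W →L[ℝ] ℝ) :=
    (ContinuousLinearMap.compL ℝ W V ℝ).flip W.subtypeL with hPdef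
  set Q : (V →L[ℝ] ℝ) →L[ℝ] (W →L[ℝ] ℝ) := (1 / 2 : ℝ) • P with hQdef
  set f : V → (W →L[ℝ] ℝ) := fun x => Q (G x) with hfdef
  set f' : V →L[ℝ] (W →L[ℝ] ℝ) := Q.comp (B v) with hf'def
  -- evaluation formulas
  have hfeval : ∀ x : V, ∀ w : W, f x w = (1 / 2) * G x (w : V) := by
    intro x w
    simp [hfdef, hQdef, hPdef, ContinuousLinearMap.compL_apply, ContinuousLinearMap.flip_apply]
  have hf'eval : ∀ z : V, ∀ w : W, f' z w = fundTensor F v z (w : V) := by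
    intro z w
    have : f' z w = (1 / 2) * B v z (w : V) := by
      simp [hf'def, hQdef, hPdef, ContinuousLinearMap.compL_apply,
        ContinuousLinearMap.flip_apply]
    rw [this, fundTensor_eq hF hv]
  -- characterization of S via f
  have hchar : ∀ x : V, x ≠ 0 → ((∀ w ∈ W, fundTensor F x x w = 0) ↔ f x = 0) := by
    intro x hx
    constructor
    · intro h
      ext w
      rw [hfeval x w, ContinuousLinearMap.zero_apply]
      have := h (w : V) w.2
      rw [fundTensor_self_eq hF hx] at this
      exact this
    · intro h w hw
      rw [fundTensor_self_eq hF hx]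
      have := congrArg (fun L => L ⟨w, hw⟩) h
      simpa [hfeval x ⟨w, hw⟩] using this
  have hfv : f v = 0 := (hchar v hv).1 hvW
  -- derivative of f at v
  have hGat : ContDiffAt ℝ (⊤ : ℕ∞) G v :=
    (hφ.contDiffAt (hop.mem_nhds hv)).fderiv_right (by simp)
  have hGstrict : HasStrictFDerivAt G (B v) v := hGat.hasStrictFDerivAt (by simp)
  have hC : ContDiff ℝ (⊤ : ℕ∞) Q := ContinuousLinearMap.contDiff (𝕜 := ℝ) (E := V →L[ℝ] ℝ) (F := W →L[ℝ] ℝ) Q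
  have hQs : HasStrictFDerivAt Q Q (G v) := by
    have := (hC.contDiffAt (x := G v)).hasStrictFDerivAt (by simp)
    rwa [ContinuousLinearMap.fderiv] at this
  have hf : HasStrictFDerivAt f f' v := by
    rw [hfdef, hf'def]
    exact HasStrictFDerivAt.comp (F := V →L[ℝ] ℝ) (G := W →L[ℝ] ℝ) v hQs hGstrict
  -- kernel characterization
  have hker : ∀ z : V, (f' z = 0 ↔ ∀ w ∈ W, fundTensor F v z w = 0) := by
    intro z
    constructor
    · intro h w hw
      rw [← hf'eval z ⟨w, hw⟩, h, ContinuousLinearMap.zero_apply]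
    · intro h
      ext w
      rw [hf'eval z w, ContinuousLinearMap.zero_apply]
      exact h (w : V) w.2
  -- surjectivity of f'
  have hsurj : Function.Surjective f' := by
    have hfr : Module.finrank ℝ W = Module.finrank ℝ (W →L[ℝ] ℝ) := by
      rw [← (LinearMap.toContinuousLinearMap :
        (W →ₗ[ℝ] ℝ) ≃ₗ[ℝ] (W →L[ℝ] ℝ)).finrank_eq]
      exact (Subspace.dual_finrank_eq (K := ℝ) (V := W)).symm
    have hinj : Function.Injective ((f'.comp W.subtypeL : W →L[ℝ] (W →L[ℝ] ℝ)) :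
        W →ₗ[ℝ] (W →L[ℝ] ℝ)) := by
      intro u₁ u₂ h
      have h0 : f' ((u₁ - u₂ : W) : V) = 0 := by
        have : (f'.comp W.subtypeL) (u₁ - u₂) = 0 := by
          simp only [map_sub]
          rw [show (f'.comp W.subtypeL) u₁ = (f'.comp W.subtypeL) u₂ from h]
          simp
        simpa using this
      by_contra hne
      have hne' : ((u₁ - u₂ : W) : V) ≠ 0 := by
        intro hz
        exact (sub_ne_zero.2 hne) (by exact_mod_cast Submodule.coe_eq_zero.1 hz)
      have hpos := hF.posdef v hv _ hne'
      have hzero : fundTensor F v ((u₁ - u₂ : W) : V) ((u₁ - u₂ : W) : V) = 0 := by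
        rw [← hf'eval ((u₁ - u₂ : W) : V) (u₁ - u₂), h0, ContinuousLinearMap.zero_apply]
      rw [hzero] at hpos
      exact lt_irrefl 0 hpos
    have hsurjT : Function.Surjective ((f'.comp W.subtypeL : W →L[ℝ] (W →L[ℝ] ℝ)) :
        W →ₗ[ℝ] (W →L[ℝ] ℝ)) :=
      (LinearMap.injective_iff_surjective_of_finrank_eq_finrank hfr).1 hinj
    intro y
    obtain ⟨u, hu⟩ := hsurjT y
    exact ⟨(u : V), by simpa using hu⟩
  have hsurj' : f'.range = ⊤ := (LinearMap.range_eq_top (f := (f' : V →ₗ[ℝ] (W →L[ℝ] ℝ)))).2 hsurj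
  constructor
  · -- the submersion data
    refine ⟨f, {(0 : V)}ᶜ, hop, hv, ?_, ?_, f', hf.hasFDerivAt, hsurj⟩
    · have hGsm : ContDiffOn ℝ (⊤ : ℕ∞) G ({(0 : V)}ᶜ) := hφ.fderiv_of_isOpen hop (by simp)
      rw [hfdef]
      exact hC.comp_contDiffOn hGsm
    · ext x
      simp only [hSdef, mem_inter_iff, mem_setOf_eq, mem_compl_iff, mem_singleton_iff]
      constructor
      · rintro ⟨⟨hx0, hxw⟩, _⟩
        exact ⟨hx0, (hchar x hx0).1 hxw⟩
      · rintro ⟨hx0, hfx⟩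
        exact ⟨⟨hx0, (hchar x hx0).2 hfx⟩, hx0⟩
  · -- tangent cone computation
    apply Set.Subset.antisymm
    · -- ⊆ : tangent cone is inside the kernel
      intro u hu
      have h1 := HasFDerivWithinAt.mapsTo_tangent_cone (𝕜 := ℝ) (E := V) (F := W →L[ℝ] ℝ) (hf.hasFDerivAt.hasFDerivWithinAt (s := S)) hu
      have himg : f '' S ⊆ {0} := by
        rintro _ ⟨x, hxS, rfl⟩
        exact (hchar x hxS.1).1 hxS.2
      rw [hfv] at h1
      have h2 := tangentConeAt_mono (𝕜 := ℝ) himg h1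
      exact (hker u).1 (tangentCone_singleton_zero (E := W →L[ℝ] ℝ) h2)
    · -- ⊇ : kernel is inside the tangent cone, via the implicit function theorem
      intro u hu
      have huker : u ∈ f'.ker := by
        simpa [LinearMap.mem_ker] using (hker u).2 hu
      set u₀ : f'.ker := ⟨u, huker⟩ with hu₀def
      set ψ := hf.implicitFunction (𝕜 := ℝ) (E := V) (F := W →L[ℝ] ℝ) f f' hsurj' (f v) with hψdef
      set c : ℕ → ℝ := fun n => (n : ℝ) + 1 with hcdef
      have hcpos : ∀ n : ℕ, (0 : ℝ) < c n := fun n => by positivity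
      have hcne : ∀ n : ℕ, c n ≠ 0 := fun n => ne_of_gt (hcpos n)
      set z : ℕ → f'.ker := fun n => (c n)⁻¹ • u₀ with hzdef
      set d : ℕ → V := fun n => ψ (z n) - v with hddef
      have hz0 : Tendsto z atTop (𝓝 0) := by
        have h1 : Tendsto (fun n : ℕ => (c n)⁻¹) atTop (𝓝 0) := by
          apply tendsto_inv_atTop_zero.comp
          exact tendsto_atTop_add_const_right _ _ tendsto_natCast_atTop_atTop
        have := h1.smul_const u₀
        simpa using this
      have hψ0 : ψ 0 = v := hf.implicitFunction_apply_image (𝕜 := ℝ) (E := V) (F := W →L[ℝ] ℝ) hsurj'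
      have hψlim : Tendsto (fun n => ψ (z n)) atTop (𝓝 v) :=
        hf.tendsto_implicitFunction (𝕜 := ℝ) (E := V) (F := W →L[ℝ] ℝ) hsurj' tendsto_const_nhds hz0
      have hψstrict : HasStrictFDerivAt ψ (f'.ker).subtypeL 0 :=
        hf.to_implicitFunction (𝕜 := ℝ) (E := V) (F := W →L[ℝ] ℝ) hsurj'
      -- eventually the points are in S
      have hmem : ∀ᶠ n in atTop, v + d n ∈ S := by
        have h1 : ∀ᶠ n in atTop, f (ψ (z n)) = f v := by
          have hpt : Tendsto (fun n => (f v, z n)) atTop (𝓝 (f v, 0)) :=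
            tendsto_const_nhds.prodMk_nhds hz0
          exact hpt.eventually (hf.map_implicitFunction_eq (𝕜 := ℝ) (E := V) (F := W →L[ℝ] ℝ) hsurj')
        have h2 : ∀ᶠ n in atTop, ψ (z n) ≠ 0 := by
          have : ∀ᶠ y in 𝓝 v, y ∈ ({(0 : V)}ᶜ) := hop.eventually_mem hv
          exact (hψlim.eventually this).mono (fun n hn => hn)
        filter_upwards [h1, h2] with n h1n h2n
        have hvd : v + d n = ψ (z n) := by simp [hddef]
        rw [hvd]
        exact ⟨h2n, (hchar _ h2n).2 (by rw [h1n, hfv])⟩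
      -- the norms of c tend to infinity
      have hcn : Tendsto (fun n : ℕ => ‖c n‖) atTop atTop := by
        have heq : (fun n : ℕ => ‖c n‖) = fun n : ℕ => (n : ℝ) + 1 := by
          funext n
          rw [Real.norm_eq_abs, abs_of_pos (hcpos n)]
        rw [heq]
        exact tendsto_atTop_add_const_right _ _ tendsto_natCast_atTop_atTop
      -- c n • d n → u
      have hfin : Tendsto (fun n => c n • d n) atTop (𝓝 u) := by
        have hlo : (fun z' : f'.ker => ψ z' - ψ 0 -
            (f'.ker).subtypeL (z' - 0)) =o[𝓝 0] (fun z' => z' - 0) :=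
          hψstrict.hasFDerivAt.isLittleO
        have hcomp : (fun n => ψ (z n) - ψ 0 - (f'.ker).subtypeL (z n - 0))
            =o[atTop] (fun n => z n - 0) := hlo.comp_tendsto hz0
        simp only [sub_zero] at hcomp
        have hsm : (fun n => c n • (ψ (z n) - ψ 0 - (f'.ker).subtypeL (z n)))
            =o[atTop] (fun n => c n • z n) :=
          (isBigO_refl c atTop).smul_isLittleO hcomp
        have hcz : ∀ n, c n • z n = u₀ := by
          intro n
          rw [hzdef]
          simp only
          rw [smul_smul, mul_inv_cancel₀ (hcne n), one_smul]
        simp only [hcz] at hsm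
        have hbig : (fun _ : ℕ => u₀) =O[atTop] (fun _ : ℕ => (1 : ℝ)) :=
          isBigO_const_const _ one_ne_zero _
        have htend : Tendsto (fun n => c n • (ψ (z n) - ψ 0 -
            (f'.ker).subtypeL (z n))) atTop (𝓝 0) :=
          (isLittleO_one_iff ℝ).1 (hsm.trans_isBigO hbig)
        have heq : ∀ n, c n • d n = u + c n • (ψ (z n) - ψ 0 -
            (f'.ker).subtypeL (z n)) := by
          intro n
          have hsub : ((f'.ker).subtypeL (z n) : V) = (c n)⁻¹ • u := by
            simp [hzdef, hu₀def]
          rw [hψ0, hsub]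
          simp only [hddef, smul_sub]
          rw [smul_smul, mul_inv_cancel₀ (hcne n), one_smul]
          abel
        simp only [heq]
        have hfin' : Tendsto (fun n => u + c n • (ψ (z n) - ψ 0 -
            (f'.ker).subtypeL (z n))) atTop (𝓝 (u + 0)) :=
          Tendsto.const_add u htend
        simpa using hfin'
      exact mem_tangentConeAt_iff_exists_seq_norm_tendsto_atTop.2 ⟨c, fun n => d n, hcn, hmem, hfin⟩
end

section
/- Let π: V₁ → V₂ be a surjective linear map between finite-dimensional real vector spaces, F₁ a Minkowski norm on V₁, and φ: ν(π)₀ → V₂ \ {0} the bijection given by restricting π to the nonzero F₁-orthogonal vectors to ker π. Define F₂(w) = F₁(φ⁻¹(w)) for w ≠ 0 and F₂(0) = 0. Then for every w ∈ V₂, F₂(w) = inf{ F₁(v) : v ∈ V₁, π(v) = w }. -/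
open scoped ContDiff


/-- Key analytic lemma: if the line through `v₀` in direction `u` avoids the origin,
`u ≠ 0`, and `v₀` is `g`-orthogonal to `u`, then `F (v₀) ≤ F (v₀ + u)`. -/
theorem minkowski_min_of_orth {V : Type*} [NormedAddCommGroup V] [NormedSpace ℝ V]
    (F : V → ℝ) (hF : IsMinkowskiNorm F) (v₀ u : V) (hu : u ≠ 0)
    (hline : ∀ r : ℝ, v₀ + r • u ≠ 0)
    (horth : fundTensor F v₀ v₀ u = 0) : F v₀ ≤ F (v₀ + u) := by
  set h : ℝ → ℝ := fun r => (F (v₀ + r • u)) ^ 2 with hh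
  -- smoothness of h
  have hℓ : ContDiff ℝ ∞ (fun r : ℝ => v₀ + r • u) :=
    contDiff_const.add (contDiff_id.smul contDiff_const)
  have hFℓ : ContDiff ℝ ∞ (fun r : ℝ => F (v₀ + r • u)) := by
    rw [← contDiffOn_univ]
    exact (hF.smooth.of_le (by simp)).comp hℓ.contDiffOn fun r _ => hline r
  have hsm : ContDiff ℝ ∞ h := hFℓ.pow 2
  have hdiff : Differentiable ℝ h := hsm.differentiable (by simp)
  have hsm1 : ContDiff ℝ ∞ (deriv h) := (contDiff_infty_iff_deriv.mp hsm).2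
  have hdiff1 : Differentiable ℝ (deriv h) := hsm1.differentiable (by simp)
  -- second derivative is positive everywhere
  have hpos2 : ∀ t : ℝ, 0 < deriv (deriv h) t := by
    intro t
    have hft : fundTensor F (v₀ + t • u) u u = (1 / 2) * deriv (deriv h) t := by
      unfold fundTensor
      have e1 : ∀ t' : ℝ,
          (fun s : ℝ => (F ((v₀ + t • u) + t' • u + s • u)) ^ 2)
            = fun s : ℝ => h ((t + t') + s) := by
        intro t'; funext s
        have : (v₀ + t • u) + t' • u + s • u = v₀ + ((t + t') + s) • u := by
          simp [add_smul]; abel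
        simp [hh, this]
      have e2 : (fun t' : ℝ => deriv (fun s : ℝ =>
            (F ((v₀ + t • u) + t' • u + s • u)) ^ 2) 0)
          = fun t' : ℝ => deriv h (t + t') := by
        funext t'
        rw [e1 t', deriv_comp_const_add]
        norm_num
      rw [e2, deriv_comp_const_add]
      norm_num
    have := hF.posdef _ (hline t) u hu
    rw [hft] at this
    linarith
  -- first derivative at 0 vanishes
  have hd0 : deriv h 0 = 0 := by
    have key : fundTensor F v₀ v₀ u = (1 / 2) * deriv h 0 := by
      unfold fundTensor
      have hq : ∀ t ∈ Set.Ioi (-1 : ℝ),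
          deriv (fun s : ℝ => (F (v₀ + t • v₀ + s • u)) ^ 2) 0
            = (1 + t) * deriv h 0 := by
        intro t ht
        have h1t : (0 : ℝ) < 1 + t := by linarith [Set.mem_Ioi.mp ht]
        have h1t' : (1 : ℝ) + t ≠ 0 := ne_of_gt h1t
        have e : (fun s : ℝ => (F (v₀ + t • v₀ + s • u)) ^ 2)
            = fun s : ℝ => (1 + t) ^ 2 * h (s * (1 + t)⁻¹) := by
          funext s
          have hv : v₀ + t • v₀ + s • u = (1 + t) • (v₀ + (s * (1 + t)⁻¹) • u) := by
            rw [smul_add, smul_smul, add_smul, one_smul]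
            have : (1 + t) * (s * (1 + t)⁻¹) = s := by field_simp
            rw [this]
          rw [hv, hF.homog _ h1t, mul_pow, hh]
        rw [e]
        have hc : HasDerivAt (fun s : ℝ => h (s * (1 + t)⁻¹))
            (deriv h 0 * (1 + t)⁻¹) 0 := by
          have hinner : HasDerivAt (fun s : ℝ => s * (1 + t)⁻¹) ((1 + t)⁻¹) 0 :=
            hasDerivAt_mul_const _
          have houter : HasDerivAt h (deriv h 0) ((fun s : ℝ => s * (1 + t)⁻¹) 0) := by
            simpa using (hdiff 0).hasDerivAt
          exact houter.comp 0 hinner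
        have := (hc.const_mul ((1 + t) ^ 2)).deriv
        rw [this]
        field_simp
      have hev : (fun t : ℝ => deriv (fun s : ℝ => (F (v₀ + t • v₀ + s • u)) ^ 2) 0)
          =ᶠ[nhds (0 : ℝ)] fun t => (1 + t) * deriv h 0 := by
        filter_upwards [Ioi_mem_nhds (by norm_num : (-1 : ℝ) < 0)] with t ht
        exact hq t ht
      rw [hev.deriv_eq]
      have : HasDerivAt (fun t : ℝ => (1 + t) * deriv h 0) (1 * deriv h 0) 0 :=
        ((hasDerivAt_id (0 : ℝ)).const_add 1).mul_const _
      rw [this.deriv]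
      ring
    rw [horth] at key
    linarith
  -- h is monotone on [0,1]
  have hmono : MonotoneOn h (Set.Icc (0 : ℝ) 1) := by
    apply monotoneOn_of_deriv_nonneg (convex_Icc 0 1)
      (hsm.continuous.continuousOn) (hdiff.differentiableOn)
    intro t htmem
    rw [interior_Icc] at htmem
    have hsm' : StrictMono (deriv h) := strictMono_of_deriv_pos hpos2
    have : deriv h 0 < deriv h t := hsm' htmem.1
    linarith
  have h01 : h 0 ≤ h 1 :=
    hmono (Set.mem_Icc.mpr ⟨le_refl 0, zero_le_one⟩)
      (Set.mem_Icc.mpr ⟨zero_le_one, le_refl 1⟩) zero_le_one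
  have h0 : h 0 = (F v₀) ^ 2 := by simp [hh]
  have h1 : h 1 = (F (v₀ + u)) ^ 2 := by simp [hh]
  rw [h0, h1] at h01
  nlinarith [hF.nonneg v₀, hF.nonneg (v₀ + u)]

/-- If `F₂` is obtained from `F₁` through the bijection `φ = π|_{ν(π)₀}` (i.e. `F₂(π v) = F₁(v)`
for `v` orthogonal to `ker π`, and `F₂(0) = 0`), then `F₂(w) = inf{F₁(v) : π(v) = w}`. -/
theorem submersion_norm_eq_inf {V₁ V₂ : Type*}
    [NormedAddCommGroup V₁] [NormedSpace ℝ V₁] [FiniteDimensional ℝ V₁]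
    [NormedAddCommGroup V₂] [NormedSpace ℝ V₂] [FiniteDimensional ℝ V₂]
    (π : V₁ →ₗ[ℝ] V₂) (hπ : Function.Surjective π)
    (F₁ : V₁ → ℝ) (hF₁ : IsMinkowskiNorm F₁)
    (hbij : Set.BijOn π {v : V₁ | v ≠ 0 ∧ ∀ u ∈ LinearMap.ker π, fundTensor F₁ v v u = 0}
      {w : V₂ | w ≠ 0})
    (F₂ : V₂ → ℝ) (hF₂0 : F₂ 0 = 0)
    (hF₂ : ∀ v ∈ {v : V₁ | v ≠ 0 ∧ ∀ u ∈ LinearMap.ker π, fundTensor F₁ v v u = 0},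
      F₂ (π v) = F₁ v) :
    ∀ w : V₂, F₂ w = sInf (F₁ '' {v : V₁ | π v = w}) := by
  have hF₁0 : F₁ 0 = 0 := by
    have := hF₁.homog 2 (by norm_num) 0
    simp at this
    linarith
  intro w
  by_cases hw : w = 0
  · subst hw
    rw [hF₂0]
    have hleast : IsLeast (F₁ '' {v : V₁ | π v = 0}) 0 := by
      constructor
      · exact ⟨0, by simp, hF₁0⟩
      · rintro x ⟨v, -, rfl⟩
        exact hF₁.nonneg v
    rw [hleast.csInf_eq]
  · obtain ⟨v₀, hv₀mem, hπv₀⟩ := hbij.surjOn (show w ∈ {w : V₂ | w ≠ 0} from hw)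
    have hmin : ∀ v, π v = w → F₁ v₀ ≤ F₁ v := by
      intro v hv
      set u := v - v₀ with hu_def
      have huker : u ∈ LinearMap.ker π := by
        simp [hu_def, map_sub, hv, hπv₀]
      by_cases hu : u = 0
      · have : v = v₀ := by
          have := sub_eq_zero.mp hu
          exact this
        rw [this]
      · have hline : ∀ r : ℝ, v₀ + r • u ≠ 0 := by
          intro r hr
          apply hw
          have hv₀eq : v₀ = -(r • u) := by
            rw [← neg_eq_of_add_eq_zero_left hr]
          rw [← hπv₀, hv₀eq]
          have : π u = 0 := huker
          simp [map_neg, map_smul, this]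
        have horth := hv₀mem.2 u huker
        have := minkowski_min_of_orth F₁ hF₁ v₀ u hu hline horth
        have hvu : v₀ + u = v := by simp [hu_def]
        rwa [hvu] at this
    have hleast : IsLeast (F₁ '' {v : V₁ | π v = w}) (F₁ v₀) := by
      constructor
      · exact ⟨v₀, hπv₀, rfl⟩
      · rintro x ⟨v, hv, rfl⟩
        exact hmin v hv
    rw [hleast.csInf_eq, ← hπv₀, hF₂ v₀ hv₀mem]
end

section
/- Let π: V₁ → V₂ be a surjective linear map, F₁ a Minkowski norm on V₁, and suppose π: (V₁,F₁) → (V₂,F₂) is a linear Finsler submersion, i.e., π maps the open unit ball of F₁ onto the open unit ball of F₂. If W̃ ∈ V₁ with F₁(−W̃) < 1 and W = π(W̃), then π is also a linear Finsler submersion from (V₁, (F₁)_{W̃}) to (V₂, (F₂)_W), where (F₁)_{W̃} is the Minkowski norm whose unit ball is the unit ball of F₁ translated by W̃, and similarly for (F₂)_W. -/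
/-- A translation of a linear Finsler submersion is a linear Finsler submersion: if `π` maps the
open `F₁`-unit ball onto the open `F₂`-unit ball, `F₁(−W̃) < 1`, `W = π(W̃)`, and `G₁`, `G₂` are
the Minkowski norms whose unit balls are the unit balls of `F₁`, `F₂` translated by `W̃`, `W`
respectively, then `π` maps the open `G₁`-unit ball onto the open `G₂`-unit ball. -/
theorem translation_finsler_submersion {V₁ V₂ : Type*}
    [NormedAddCommGroup V₁] [NormedSpace ℝ V₁] [FiniteDimensional ℝ V₁]
    [NormedAddCommGroup V₂] [NormedSpace ℝ V₂] [FiniteDimensional ℝ V₂]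
    (π : V₁ →ₗ[ℝ] V₂) (hπ : Function.Surjective π)
    (F₁ : V₁ → ℝ) (F₂ : V₂ → ℝ) (hF₁ : IsMinkowskiNorm F₁) (hF₂ : IsMinkowskiNorm F₂)
    (hsub : π '' {v : V₁ | F₁ v < 1} = {w : V₂ | F₂ w < 1})
    (W' : V₁) (hW' : F₁ (-W') < 1) (W : V₂) (hW : W = π W')
    (G₁ : V₁ → ℝ) (G₂ : V₂ → ℝ) (hG₁ : IsMinkowskiNorm G₁) (hG₂ : IsMinkowskiNorm G₂)
    (hG₁ball : {v : V₁ | G₁ v < 1} = (fun v => v + W') '' {v : V₁ | F₁ v < 1})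
    (hG₂ball : {w : V₂ | G₂ w < 1} = (fun w => w + W) '' {w : V₂ | F₂ w < 1}) :
    π '' {v : V₁ | G₁ v < 1} = {w : V₂ | G₂ w < 1} := by
  rw [hG₁ball, hG₂ball, ← Set.image_comp, ← hsub, ← Set.image_comp]
  apply Set.image_congr
  intro v _
  simp [hW, map_add]
end

section
/- Let Z(v) = √⟨v,v⟩ + ⟨v,B⟩ be a Randers norm on ℝⁿ with ⟨B,B⟩ < 1, B ≠ 0, unit sphere S⁺ = Z⁻¹(1), and p = δB ∈ S⁺ for δ > 0. Then the affine hyperplane V = {y : ⟨y,B⟩ = ⟨p,B⟩} intersects S⁺ exactly at the single point p. -/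
open scoped RealInnerProductSpace

/-- For a Randers norm `Z(v) = √⟨v,v⟩ + ⟨v,B⟩` on `ℝⁿ` with `⟨B,B⟩ < 1`, `B ≠ 0`, and
`p = δB` on the unit sphere `S⁺ = Z⁻¹(1)` with `δ > 0`, the affine hyperplane
`{y : ⟨y,B⟩ = ⟨p,B⟩}` meets `S⁺` exactly at `p`. -/
theorem hyperplane_meets_sphere_at_point {n : ℕ}
    (B : EuclideanSpace ℝ (Fin n)) (hB : ⟪B, B⟫ < 1) (hB0 : B ≠ 0)
    (Z : EuclideanSpace ℝ (Fin n) → ℝ)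
    (hZdef : ∀ v, Z v = Real.sqrt ⟪v, v⟫ + ⟪v, B⟫)
    (δ : ℝ) (hδ : 0 < δ) (hp : Z (δ • B) = 1) :
    {y : EuclideanSpace ℝ (Fin n) | ⟪y, B⟫ = ⟪δ • B, B⟫} ∩ {v | Z v = 1} = {δ • B} := by
  have hBnorm : (0:ℝ) < ‖B‖ := norm_pos_iff.mpr hB0
  have hsqrt : ∀ v : EuclideanSpace ℝ (Fin n), Real.sqrt ⟪v, v⟫ = ‖v‖ := by
    intro v
    rw [real_inner_self_eq_norm_sq, Real.sqrt_sq (norm_nonneg _)]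
  have hnp : ‖δ • B‖ = δ * ‖B‖ := by
    rw [norm_smul, Real.norm_eq_abs, abs_of_pos hδ]
  have hpB : ⟪δ • B, B⟫ = δ * ⟪B, B⟫ := real_inner_smul_left B B δ
  have hBB : ⟪B, B⟫ = ‖B‖ * ‖B‖ := by
    rw [real_inner_self_eq_norm_sq]; ring
  rw [hZdef, hsqrt, hnp, hpB] at hp
  ext y
  simp only [Set.mem_inter_iff, Set.mem_setOf_eq, Set.mem_singleton_iff]
  constructor
  · rintro ⟨h1, h2⟩
    rw [hZdef, hsqrt] at h2
    rw [hpB] at h1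
    have hny : ‖y‖ = δ * ‖B‖ := by linarith
    have hcs : ⟪y, B⟫ = ‖y‖ * ‖B‖ := by
      rw [h1, hny, hBB]; ring
    have heq : ‖B‖ • y = ‖y‖ • B := (inner_eq_norm_mul_iff_real).mp hcs
    have : ‖B‖ • y = ‖B‖ • (δ • B) := by
      rw [heq, hny, smul_smul, mul_comm]
    exact smul_right_injective _ (ne_of_gt hBnorm) this
  · rintro rfl
    refine ⟨rfl, ?_⟩
    rw [hZdef, hsqrt, hnp, hpB]; linarith
end

section
/- Let F be a Minkowski norm on a finite-dimensional real vector space V and define the Legendre map L: V \ {0} → V* \ {0} by L(v) = g_v(v, ·), where g is the fundamental tensor of F. Then L is a diffeomorphism onto its image; in particular L is injective. -/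
open scoped ContDiff Topology
open Set Filter Metric

namespace MinkowskiAux

variable {V : Type*} [NormedAddCommGroup V] [NormedSpace ℝ V]

/-- The square of `F`. -/
noncomputable def msq (F : V → ℝ) : V → ℝ := fun x => (F x) ^ 2

variable {F : V → ℝ}

theorem msq_smooth (hF : IsMinkowskiNorm F) : ContDiffOn ℝ (⊤ : ℕ∞) (msq F) {(0 : V)}ᶜ :=
  hF.smooth.pow 2

theorem msq_contDiffAt (hF : IsMinkowskiNorm F) {v : V} (hv : v ≠ 0) :
    ContDiffAt ℝ (⊤ : ℕ∞) (msq F) v :=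
  (msq_smooth hF).contDiffAt (isOpen_compl_singleton.mem_nhds hv)

theorem msq_hasFDerivAt (hF : IsMinkowskiNorm F) {v : V} (hv : v ≠ 0) :
    HasFDerivAt (msq F) (fderiv ℝ (msq F) v) v :=
  ((msq_contDiffAt hF hv).differentiableAt (by simp)).hasFDerivAt

theorem fundTensor_eq_deriv (hF : IsMinkowskiNorm F) {v : V} (hv : v ≠ 0) (u w : V) :
    fundTensor F v u w = (1 / 2) * deriv (fun t : ℝ => fderiv ℝ (msq F) (v + t • u) w) 0 := by
  have hmem : {t : ℝ | v + t • u ≠ 0} ∈ 𝓝 (0 : ℝ) := by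
    have hc : Continuous fun t : ℝ => v + t • u := by continuity
    have hop : IsOpen {t : ℝ | v + t • u ≠ 0} := isOpen_compl_singleton.preimage hc
    exact hop.mem_nhds (by simpa using hv)
  have heq : (fun t : ℝ => deriv (fun s : ℝ => (F (v + t • u + s • w)) ^ 2) 0)
      =ᶠ[𝓝 (0 : ℝ)] fun t : ℝ => fderiv ℝ (msq F) (v + t • u) w := by
    filter_upwards [hmem] with t ht
    have hline : HasDerivAt (fun s : ℝ => v + t • u + s • w) w 0 := by
      simpa using ((hasDerivAt_id (0 : ℝ)).smul_const w).const_add (v + t • u)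
    have hcomp := (msq_hasFDerivAt hF ht).comp_hasDerivAt_of_eq 0 hline (by simp)
    exact hcomp.deriv
  unfold fundTensor
  rw [heq.deriv_eq]

theorem fderiv_msq_smul (hF : IsMinkowskiNorm F) {v : V} (hv : v ≠ 0) {l : ℝ} (hl : 0 < l) :
    fderiv ℝ (msq F) (l • v) = l • fderiv ℝ (msq F) v := by
  have hlv : l • v ≠ 0 := smul_ne_zero hl.ne' hv
  have hsm : HasFDerivAt (fun x : V => l • x) (l • ContinuousLinearMap.id ℝ V) v :=
    (hasFDerivAt_id v).const_smul l
  have h1 : HasFDerivAt (fun x : V => msq F (l • x))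
      ((fderiv ℝ (msq F) (l • v)).comp (l • ContinuousLinearMap.id ℝ V)) v :=
    (msq_hasFDerivAt hF hlv).comp v hsm
  have h2 : HasFDerivAt (fun x : V => l ^ 2 * msq F x) ((l ^ 2) • fderiv ℝ (msq F) v) v :=
    (msq_hasFDerivAt hF hv).const_mul (l ^ 2)
  have hfun : (fun x : V => msq F (l • x)) = fun x : V => l ^ 2 * msq F x := by
    funext x
    simp only [msq]
    rw [hF.homog l hl x]
    ring
  rw [hfun] at h1
  have h3 := h1.unique h2
  ext w
  have h4 := congrArg (fun A : V →L[ℝ] ℝ => A w) h3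
  simp only [ContinuousLinearMap.comp_apply, ContinuousLinearMap.smul_apply,
    ContinuousLinearMap.id_apply, map_smul, smul_eq_mul] at h4 ⊢
  have h5 : l * (l * fderiv ℝ (msq F) v w) = l ^ 2 * fderiv ℝ (msq F) v w := by ring
  exact mul_left_cancel₀ hl.ne' (h4.trans h5.symm)

theorem fundTensor_self (hF : IsMinkowskiNorm F) {v : V} (hv : v ≠ 0) (w : V) :
    fundTensor F v v w = (1 / 2) * fderiv ℝ (msq F) v w := by
  rw [fundTensor_eq_deriv hF hv v w]
  congr 1
  have heq : (fun t : ℝ => fderiv ℝ (msq F) (v + t • v) w)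
      =ᶠ[𝓝 (0 : ℝ)] fun t : ℝ => (1 + t) * fderiv ℝ (msq F) v w := by
    filter_upwards [Ioi_mem_nhds (show (-1 : ℝ) < 0 by norm_num)] with t ht
    have h1t : (0 : ℝ) < 1 + t := by
      have := mem_Ioi.mp ht; linarith
    have hvv : v + t • v = (1 + t) • v := by rw [add_smul, one_smul]
    rw [hvv, fderiv_msq_smul hF hv h1t]
    simp [smul_eq_mul]
  rw [heq.deriv_eq]
  have hD : HasDerivAt (fun t : ℝ => (1 + t) * fderiv ℝ (msq F) v w)
      (fderiv ℝ (msq F) v w) 0 := by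
    simpa using ((hasDerivAt_id (0 : ℝ)).const_add 1).mul_const (fderiv ℝ (msq F) v w)
  rw [hD.deriv]

theorem fderiv_fderiv_diffAt (hF : IsMinkowskiNorm F) {v : V} (hv : v ≠ 0) :
    DifferentiableAt ℝ (fderiv ℝ (msq F)) v :=
  ((msq_contDiffAt hF hv).fderiv_right (m := 1) (by change (((1 + 1 : ℕ) : ℕ∞) : WithTop ℕ∞) ≤ ((⊤ : ℕ∞) : WithTop ℕ∞); exact WithTop.coe_le_coe.mpr le_top)).differentiableAt one_ne_zero

theorem hasFDerivAt_eval (hF : IsMinkowskiNorm F) {v : V} (hv : v ≠ 0) (w : V) :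
    HasFDerivAt (fun x : V => fderiv ℝ (msq F) x w)
      ((ContinuousLinearMap.apply ℝ ℝ w).comp (fderiv ℝ (fderiv ℝ (msq F)) v)) v :=
  (ContinuousLinearMap.apply ℝ ℝ w).hasFDerivAt.comp v (fderiv_fderiv_diffAt hF hv).hasFDerivAt

theorem fundTensor_eq_fderiv2 (hF : IsMinkowskiNorm F) {v : V} (hv : v ≠ 0) (u w : V) :
    fundTensor F v u w = (1 / 2) * (fderiv ℝ (fderiv ℝ (msq F)) v u) w := by
  rw [fundTensor_eq_deriv hF hv u w]
  congr 1
  have hline : HasDerivAt (fun t : ℝ => v + t • u) u 0 := by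
    simpa using ((hasDerivAt_id (0 : ℝ)).smul_const u).const_add v
  have hcomp := (hasFDerivAt_eval hF hv w).comp_hasDerivAt_of_eq 0 hline (by simp)
  have : deriv ((fun x : V => fderiv ℝ (msq F) x w) ∘ fun t : ℝ => v + t • u) 0
      = ((ContinuousLinearMap.apply ℝ ℝ w).comp (fderiv ℝ (fderiv ℝ (msq F)) v)) u :=
    hcomp.deriv
  simpa [Function.comp_def] using this

section findim
variable [FiniteDimensional ℝ V]

theorem F_zero (hF : IsMinkowskiNorm F) : F (0 : V) = 0 := by
  have h := hF.homog 2 (by norm_num) 0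
  rw [smul_zero] at h
  linarith

theorem exists_F_bound (hF : IsMinkowskiNorm F) :
    ∃ C : ℝ, 0 ≤ C ∧ ∀ x : V, F x ≤ C * ‖x‖ := by
  have hsub : sphere (0 : V) 1 ⊆ {(0 : V)}ᶜ := by
    intro x hx
    simp only [mem_sphere_iff_norm, sub_zero] at hx
    simp only [mem_compl_iff, mem_singleton_iff]
    intro h0
    rw [h0] at hx; simp at hx
  obtain ⟨C, hC⟩ := (isCompact_sphere (0 : V) 1).exists_bound_of_continuousOn
    (hF.smooth.continuousOn.mono hsub)
  refine ⟨max C 0, le_max_right _ _, fun x => ?_⟩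
  rcases eq_or_ne x 0 with rfl | hx
  · simp [F_zero hF]
  · have hnx : (0 : ℝ) < ‖x‖ := norm_pos_iff.mpr hx
    have hy : ‖x‖⁻¹ • x ∈ sphere (0 : V) 1 := by
      simp [norm_smul, abs_of_pos (inv_pos.mpr hnx), inv_mul_cancel₀ hnx.ne']
    have hFx : F x = ‖x‖ * F (‖x‖⁻¹ • x) := by
      conv_lhs => rw [← smul_inv_smul₀ hnx.ne' x]
      exact hF.homog ‖x‖ hnx _
    have hb : F (‖x‖⁻¹ • x) ≤ max C 0 := by
      have := hC _ hy
      calc F (‖x‖⁻¹ • x) ≤ ‖F (‖x‖⁻¹ • x)‖ := le_abs_self _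
        _ ≤ C := this
        _ ≤ max C 0 := le_max_left _ _
    calc F x = ‖x‖ * F (‖x‖⁻¹ • x) := hFx
      _ ≤ ‖x‖ * max C 0 := by
          exact mul_le_mul_of_nonneg_left hb hnx.le
      _ = max C 0 * ‖x‖ := by ring

theorem msq_hasFDerivAt_zero (hF : IsMinkowskiNorm F) :
    HasFDerivAt (msq F) (0 : V →L[ℝ] ℝ) 0 := by
  obtain ⟨C, hC0, hC⟩ := exists_F_bound hF
  rw [hasFDerivAt_iff_isLittleO_nhds_zero, Asymptotics.isLittleO_iff]
  intro c hc
  have hr : (0 : ℝ) < c / (C ^ 2 + 1) := by positivity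
  filter_upwards [Metric.closedBall_mem_nhds (0 : V) hr] with h hh
  rw [Metric.mem_closedBall, dist_zero_right] at hh
  have h1 : F h ≤ C * ‖h‖ := hC h
  have h0 : 0 ≤ F h := hF.nonneg h
  have hn : 0 ≤ ‖h‖ := norm_nonneg h
  simp only [msq, zero_add, F_zero hF, ContinuousLinearMap.zero_apply, sub_zero]
  have hh' : ‖h‖ * (C ^ 2 + 1) ≤ c := (le_div_iff₀ (by positivity)).mp hh
  have hsq : F h * F h ≤ (C * ‖h‖) * (C * ‖h‖) := mul_le_mul h1 h1 h0 (mul_nonneg hC0 hn)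
  have hgoal : F h ^ 2 ≤ c * ‖h‖ := by nlinarith [mul_le_mul_of_nonneg_left hh' hn]
  have habs : ‖F h ^ 2 - 0 ^ 2‖ = F h ^ 2 := by
    rw [show F h ^ 2 - 0 ^ 2 = F h ^ 2 by ring, Real.norm_eq_abs,
      abs_of_nonneg (by positivity)]
  rw [habs]
  exact hgoal

theorem fderiv_msq_zero (hF : IsMinkowskiNorm F) : fderiv ℝ (msq F) (0 : V) = 0 :=
  (msq_hasFDerivAt_zero hF).fderiv

theorem exists_fderiv_bound (hF : IsMinkowskiNorm F) :
    ∃ C : ℝ, 0 ≤ C ∧ ∀ x : V, ‖fderiv ℝ (msq F) x‖ ≤ C * ‖x‖ := by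
  have hsub : sphere (0 : V) 1 ⊆ {(0 : V)}ᶜ := by
    intro x hx
    simp only [mem_sphere_iff_norm, sub_zero] at hx
    simp only [mem_compl_iff, mem_singleton_iff]
    intro h0
    rw [h0] at hx; simp at hx
  have hcont : ContinuousOn (fderiv ℝ (msq F)) {(0 : V)}ᶜ :=
    (msq_smooth hF).continuousOn_fderiv_of_isOpen isOpen_compl_singleton (by simp)
  obtain ⟨C, hC⟩ := (isCompact_sphere (0 : V) 1).exists_bound_of_continuousOn (hcont.mono hsub)
  refine ⟨max C 0, le_max_right _ _, fun x => ?_⟩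
  rcases eq_or_ne x 0 with rfl | hx
  · simp [fderiv_msq_zero hF]
  · have hnx : (0 : ℝ) < ‖x‖ := norm_pos_iff.mpr hx
    have hy : ‖x‖⁻¹ • x ∈ sphere (0 : V) 1 := by
      simp [norm_smul, abs_of_pos (inv_pos.mpr hnx), inv_mul_cancel₀ hnx.ne']
    have hy0 : ‖x‖⁻¹ • x ≠ 0 := smul_ne_zero (inv_ne_zero hnx.ne') hx
    have hfx : fderiv ℝ (msq F) x = ‖x‖ • fderiv ℝ (msq F) (‖x‖⁻¹ • x) := by
      conv_lhs => rw [← smul_inv_smul₀ hnx.ne' x]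
      exact fderiv_msq_smul hF hy0 hnx
    rw [hfx, norm_smul, Real.norm_eq_abs, abs_of_pos hnx]
    calc ‖x‖ * ‖fderiv ℝ (msq F) (‖x‖⁻¹ • x)‖ ≤ ‖x‖ * max C 0 := by
          exact mul_le_mul_of_nonneg_left ((hC _ hy).trans (le_max_left _ _)) hnx.le
      _ = max C 0 * ‖x‖ := by ring

end findim

/-- Monotonicity helper: a continuous function on `[0,1]` with positive derivative except
possibly at one point is increasing over the interval. -/
theorem deriv_pos_lt (g : ℝ → ℝ) (c : ℝ) (hcont : ContinuousOn g (Icc 0 1))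
    (hd : ∀ t ∈ Ioo (0 : ℝ) 1, t ≠ c → ∃ d : ℝ, 0 < d ∧ HasDerivAt g d t) : g 0 < g 1 := by
  have step : ∀ a b : ℝ, 0 ≤ a → a < b → b ≤ 1 → (∀ t ∈ Ioo a b, t ≠ c) → g a < g b := by
    intro a b ha hab hb1 hno
    refine strictMonoOn_of_deriv_pos (convex_Icc a b) (hcont.mono (Icc_subset_Icc ha hb1))
      (fun x hx => ?_) (left_mem_Icc.2 hab.le) (right_mem_Icc.2 hab.le) hab
    rw [interior_Icc] at hx
    have hxI : x ∈ Ioo (0 : ℝ) 1 := ⟨lt_of_le_of_lt ha hx.1, lt_of_lt_of_le hx.2 hb1⟩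
    obtain ⟨d, hd0, hdx⟩ := hd x hxI (hno x hx)
    rwa [hdx.deriv]
  by_cases hc : c ∈ Ioo (0 : ℝ) 1
  · exact (step 0 c le_rfl hc.1 hc.2.le fun t ht => ht.2.ne).trans
      (step c 1 hc.1.le hc.2 le_rfl fun t ht => ht.1.ne')
  · exact step 0 1 le_rfl one_pos le_rfl fun t ht h => hc (h ▸ ht)

end MinkowskiAux

open MinkowskiAux

/-- The Legendre map `𝓛(v) = g_v(v,·)` of a Minkowski norm is a diffeomorphism onto its image:
it is injective on `V \ {0}`, smooth there, and has invertible derivative at every `v ≠ 0`. -/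
theorem legendre_diffeomorphism {V : Type*} [NormedAddCommGroup V] [NormedSpace ℝ V]
    [FiniteDimensional ℝ V] (F : V → ℝ) (hF : IsMinkowskiNorm F)
    (L : V → (V →L[ℝ] ℝ)) (hL : ∀ v : V, v ≠ 0 → ∀ w : V, L v w = fundTensor F v v w) :
    Set.InjOn L {v : V | v ≠ 0} ∧ ContDiffOn ℝ (⊤ : ℕ∞) L {(0 : V)}ᶜ ∧
      ∀ v : V, v ≠ 0 → ∃ L' : V →L[ℝ] (V →L[ℝ] ℝ),
        HasFDerivAt L L' v ∧ Function.Bijective L' := by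
  classical
  have hLeq : ∀ v : V, v ≠ 0 → L v = (2⁻¹ : ℝ) • fderiv ℝ (msq F) v := by
    intro v hv
    ext w
    rw [hL v hv w, fundTensor_self hF hv w]
    simp [smul_eq_mul]
    try ring
  refine ⟨?_, ?_, ?_⟩
  · -- injectivity
    intro v1 hv1 v2 hv2 heq
    simp only [mem_setOf_eq] at hv1 hv2
    by_contra hne
    have hu0 : v2 - v1 ≠ 0 := sub_ne_zero.mpr (Ne.symm hne)
    set u : V := v2 - v1 with hu
    set p : ℝ → V := fun t => v1 + t • u with hp
    set g : ℝ → ℝ := fun t => fderiv ℝ (msq F) (p t) u with hg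
    obtain ⟨C, hC0, hCb⟩ := exists_fderiv_bound hF
    have hpc : Continuous p := by
      apply Continuous.add continuous_const
      exact continuous_id.smul continuous_const
    have hderiv : ∀ t : ℝ, p t ≠ 0 → HasDerivAt g (2 * fundTensor F (p t) u u) t := by
      intro t ht
      have hline : HasDerivAt p u t := by
        simpa [hp] using ((hasDerivAt_id t).smul_const u).const_add v1
      have hcomp := (hasFDerivAt_eval hF ht u).comp_hasDerivAt t hline
      have hval : ((ContinuousLinearMap.apply ℝ ℝ u).comp
          (fderiv ℝ (fderiv ℝ (msq F)) (p t))) u = 2 * fundTensor F (p t) u u := by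
        rw [fundTensor_eq_fderiv2 hF ht u u]
        simp [ContinuousLinearMap.comp_apply]
        try ring
      rw [hval] at hcomp
      exact hcomp
    have hcont : ContinuousOn g (Icc 0 1) := by
      intro t ht
      by_cases hpt : p t = 0
      · have hb : ∀ s : ℝ, ‖g s‖ ≤ C * ‖u‖ * ‖p s‖ := by
          intro s
          calc ‖g s‖ = ‖fderiv ℝ (msq F) (p s) u‖ := rfl
            _ ≤ ‖fderiv ℝ (msq F) (p s)‖ * ‖u‖ := ContinuousLinearMap.le_opNorm _ _
            _ ≤ C * ‖p s‖ * ‖u‖ := mul_le_mul_of_nonneg_right (hCb _) (norm_nonneg u)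
            _ = C * ‖u‖ * ‖p s‖ := by ring
        have htend : Tendsto (fun s : ℝ => C * ‖u‖ * ‖p s‖) (𝓝[Icc (0:ℝ) 1] t) (𝓝 0) := by
          have h1 : Tendsto p (𝓝[Icc (0:ℝ) 1] t) (𝓝 0) := by
            rw [← hpt]
            exact (hpc.continuousAt.continuousWithinAt)
          have := (h1.norm).const_mul (C * ‖u‖)
          simpa using this
        have hgt : g t = 0 := by
          simp [hg, hpt, fderiv_msq_zero hF]
        have := squeeze_zero_norm hb htend
        rw [ContinuousWithinAt, hgt]
        exact this
      · exact ((hderiv t hpt).continuousAt).continuousWithinAt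
    have huniq : ∀ s t : ℝ, p s = 0 → p t = 0 → s = t := by
      intro s t hs ht
      have h1 : (s - t) • u = 0 := by
        have : p s - p t = (s - t) • u := by
          simp [hp, sub_smul]
          try abel
        rw [hs, ht] at this
        simpa using this.symm
      rcases smul_eq_zero.mp h1 with h | h
      · linarith [sub_eq_zero.mp (by linarith [h] : s - t = (0:ℝ))]
      · exact absurd h hu0
    set c : ℝ := if hex : ∃ t : ℝ, p t = 0 then hex.choose else 2 with hc
    have hgood : ∀ t ∈ Ioo (0 : ℝ) 1, t ≠ c → ∃ d : ℝ, 0 < d ∧ HasDerivAt g d t := by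
      intro t _ htc
      have hpt : p t ≠ 0 := by
        intro h0
        apply htc
        by_cases hex : ∃ t : ℝ, p t = 0
        · rw [hc]
          rw [dif_pos hex]
          exact huniq t hex.choose h0 hex.choose_spec
        · exact absurd ⟨t, h0⟩ hex
      exact ⟨2 * fundTensor F (p t) u u,
        mul_pos two_pos (hF.posdef _ hpt u hu0), hderiv t hpt⟩
    have hlt := deriv_pos_lt g c hcont hgood
    have e0 : p 0 = v1 := by simp [hp]
    have e1 : p 1 = v2 := by simp [hp, hu]
    have hg0 : g 0 = 2 * L v1 u := by
      rw [hg]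
      simp only [e0]
      rw [hLeq v1 hv1]
      simp [smul_eq_mul]
      try ring
    have hg1 : g 1 = 2 * L v2 u := by
      rw [hg]
      simp only [e1]
      rw [hLeq v2 hv2]
      simp [smul_eq_mul]
      try ring
    rw [hg0, hg1, heq] at hlt
    exact lt_irrefl _ hlt
  · -- smoothness
    have hsm : ContDiffOn ℝ (⊤ : ℕ∞) (fun x : V => (2⁻¹ : ℝ) • fderiv ℝ (msq F) x) {(0 : V)}ᶜ :=
      ((msq_smooth hF).fderiv_of_isOpen isOpen_compl_singleton (by simp)).const_smul _
    exact hsm.congr fun x hx => hLeq x hx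
  · -- derivative
    intro v hv
    refine ⟨(2⁻¹ : ℝ) • fderiv ℝ (fderiv ℝ (msq F)) v, ?_, ?_⟩
    · have hEq : (fun x : V => (2⁻¹ : ℝ) • fderiv ℝ (msq F) x) =ᶠ[𝓝 v] L := by
        filter_upwards [isOpen_compl_singleton.mem_nhds (show v ∈ {(0:V)}ᶜ from hv)] with x hx
        exact (hLeq x hx).symm
      have hD : HasFDerivAt (fun x : V => (2⁻¹ : ℝ) • fderiv ℝ (msq F) x)
          ((2⁻¹ : ℝ) • fderiv ℝ (fderiv ℝ (msq F)) v) v :=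
        (fderiv_fderiv_diffAt hF hv).hasFDerivAt.const_smul (2⁻¹ : ℝ)
      exact hEq.hasFDerivAt_iff.mp hD
    · set Φ : V →L[ℝ] (V →L[ℝ] ℝ) := (2⁻¹ : ℝ) • fderiv ℝ (fderiv ℝ (msq F)) v with hΦ
      have hpt : ∀ a b : V, Φ a b = fundTensor F v a b := by
        intro a b
        rw [fundTensor_eq_fderiv2 hF hv a b]
        simp [hΦ, smul_eq_mul]
        try ring
      have hinj : Function.Injective Φ := by
        intro a b hab
        by_contra hne
        have hab0 : a - b ≠ 0 := sub_ne_zero.mpr hne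
        have h1 : Φ (a - b) = 0 := by rw [map_sub, hab, sub_self]
        have h2 : fundTensor F v (a - b) (a - b) = 0 := by
          rw [← hpt, h1]
          simp
        exact absurd h2 (ne_of_gt (hF.posdef v hv _ hab0))
      have hfr : Module.finrank ℝ V = Module.finrank ℝ (V →L[ℝ] ℝ) := by
        rw [← (LinearMap.toContinuousLinearMap :
          (V →ₗ[ℝ] ℝ) ≃ₗ[ℝ] V →L[ℝ] ℝ).finrank_eq]
        exact (Module.finrank_linearMap_self ℝ ℝ V).symm
      have hsurj : Function.Surjective Φ := by
        have h := (LinearMap.injective_iff_surjective_of_finrank_eq_finrank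
          (f := (Φ : V →L[ℝ] (V →L[ℝ] ℝ)).toLinearMap) hfr).mp hinj
        exact h
      exact ⟨hinj, hsurj⟩
end

section
/- Let Z = √a + β be a Randers norm on a finite-dimensional real vector space V with Zermelo data (h,W), and let π: (V, Z) → (V₂, Z₂) be a surjective linear Finsler submersion onto a Minkowski space (V₂, Z₂). Then Z₂ is a Randers norm: its Zermelo data is (h₂, W₂), where h₂ is the inner product making dπ restricted to the h-orthogonal complement of ker π a linear isometry onto V₂, and W₂ = π(W). -/
open scoped RealInnerProductSpace

private lemma exists_sigma {V V₂ : Type*}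
    [NormedAddCommGroup V] [InnerProductSpace ℝ V] [FiniteDimensional ℝ V]
    [NormedAddCommGroup V₂] [NormedSpace ℝ V₂] [FiniteDimensional ℝ V₂]
    (h : V → V → ℝ) (T : V →ₗ[ℝ] V) (hT : ∀ x y : V, h x y = ⟪T x, y⟫)
    (hpos : ∀ x : V, x ≠ 0 → 0 < h x x)
    (π : V →ₗ[ℝ] V₂) (hπ : Function.Surjective π) :
    ∃ σ : V₂ →ₗ[ℝ] V, (∀ w, π (σ w) = w) ∧ ∀ w, ∀ k ∈ LinearMap.ker π, h (σ w) k = 0 := by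
  have hTinj : Function.Injective T := by
    refine LinearMap.ker_eq_bot.mp (LinearMap.ker_eq_bot'.mpr ?_)
    intro x hx
    by_contra hx0
    have h1 := hpos x hx0
    rw [hT x x, hx, inner_zero_left] at h1
    exact lt_irrefl _ h1
  have hTsurj : Function.Surjective T := LinearMap.injective_iff_surjective.mp hTinj
  let eT : V ≃ₗ[ℝ] V := LinearEquiv.ofBijective T ⟨hTinj, hTsurj⟩
  set K := LinearMap.ker π with hK
  let Q : Submodule ℝ V := Submodule.map (eT.symm : V →ₗ[ℝ] V) Kᗮ
  have heT : ∀ x, eT x = T x := fun x => rfl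
  have hQmem : ∀ x : V, x ∈ Q ↔ ∀ k ∈ K, h x k = 0 := by
    intro x
    have : x ∈ Q ↔ eT x ∈ Kᗮ := by
      constructor
      · rintro ⟨y, hy, rfl⟩
        simpa using hy
      · intro hx
        exact ⟨eT x, hx, by simp⟩
    rw [this, Submodule.mem_orthogonal]
    constructor
    · intro hx k hk
      rw [hT x k, real_inner_comm, ← heT]
      exact hx k hk
    · intro hx k hk
      rw [heT, real_inner_comm, ← hT x k]
      exact hx k hk
  have hfQ : Module.finrank ℝ Q = Module.finrank ℝ V₂ := by
    have h2 : Module.finrank ℝ Q = Module.finrank ℝ Kᗮ :=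
      LinearEquiv.finrank_map_eq eT.symm Kᗮ
    have h3 := Submodule.finrank_add_finrank_orthogonal K
    have h4 := LinearMap.finrank_range_add_finrank_ker π
    rw [LinearMap.range_eq_top.mpr hπ, finrank_top, ← hK] at h4
    omega
  let πQ : Q →ₗ[ℝ] V₂ := π ∘ₗ Q.subtype
  have hinj : Function.Injective πQ := by
    refine LinearMap.ker_eq_bot.mp (LinearMap.ker_eq_bot'.mpr ?_)
    rintro ⟨x, hxQ⟩ hx0
    have hxK : x ∈ K := by
      simpa [πQ, LinearMap.mem_ker, hK] using hx0
    have hzero : h x x = 0 := (hQmem x).mp hxQ x hxK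
    have hx' : x = 0 := by
      by_contra hxne
      exact absurd hzero (ne_of_gt (hpos x hxne))
    exact Subtype.ext hx'
  have hsurj : Function.Surjective πQ :=
    (LinearMap.injective_iff_surjective_of_finrank_eq_finrank hfQ).mp hinj
  let e : Q ≃ₗ[ℝ] V₂ := LinearEquiv.ofBijective πQ ⟨hinj, hsurj⟩
  refine ⟨Q.subtype ∘ₗ e.symm.toLinearMap, ?_, ?_⟩
  · intro w
    have h1 : πQ (e.symm w) = w := e.apply_symm_apply w
    simpa [πQ] using h1
  · intro w k hk
    exact (hQmem _).mp (e.symm w).2 k hk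

/-- If `π : (V, Z) → (V₂, Z₂)` is a surjective linear Finsler submersion and `Z` is a Randers
norm with Zermelo data `(h, W)`, then `Z₂` is a Randers norm whose Zermelo data is `(h₂, π W)`,
where `h₂` is the inner product obtained by pushing forward `h` restricted to the
`h`-orthogonal complement `Q` of `ker π` via `π|_Q`. -/
theorem randers_submersion_target_randers {V V₂ : Type*}
    [NormedAddCommGroup V] [InnerProductSpace ℝ V] [FiniteDimensional ℝ V]
    [NormedAddCommGroup V₂] [NormedSpace ℝ V₂] [FiniteDimensional ℝ V₂]
    (B : V) (hB : ⟪B, B⟫ < 1)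
    (Z : V → ℝ) (hZdef : ∀ v : V, Z v = Real.sqrt ⟪v, v⟫ + ⟪v, B⟫)
    (μ : ℝ) (hμ : μ = 1 - ⟪B, B⟫)
    (h : V → V → ℝ) (hdef : ∀ w u : V, h w u = μ * (⟪w, u⟫ - ⟪B, w⟫ * ⟪B, u⟫))
    (W : V) (hWdef : W = -(μ⁻¹ • B))
    (π : V →ₗ[ℝ] V₂) (hπ : Function.Surjective π)
    (Z₂ : V₂ → ℝ) (hZ₂ : IsMinkowskiNorm Z₂)
    (hsub : π '' {v : V | Z v < 1} = {w : V₂ | Z₂ w < 1}) :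
    ∃ h₂ : V₂ → V₂ → ℝ,
      (∀ u₁ u₂ : V₂, h₂ u₁ u₂ = h₂ u₂ u₁) ∧
      (∀ w : V₂, w ≠ 0 → 0 < h₂ w w) ∧
      (∀ u v : V, u ∈ {x : V | ∀ k ∈ LinearMap.ker π, h x k = 0} →
        v ∈ {x : V | ∀ k ∈ LinearMap.ker π, h x k = 0} → h₂ (π u) (π v) = h u v) ∧
      h₂ (π W) (π W) < 1 ∧
      (∀ w : V₂, w ≠ 0 → 0 < Z₂ w ∧
        h₂ ((Z₂ w)⁻¹ • w - π W) ((Z₂ w)⁻¹ • w - π W) = 1) := by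

  have hb0 : (0:ℝ) ≤ ⟪B, B⟫ := real_inner_self_nonneg
  have hμ0 : 0 < μ := by rw [hμ]; linarith
  have hμne : μ ≠ 0 := ne_of_gt hμ0
  -- positivity of h
  have hpossemi : ∀ x : V, 0 ≤ h x x := by
    intro x
    have hcs := real_inner_mul_inner_self_le B x
    have hx0 : (0:ℝ) ≤ ⟪x,x⟫ := real_inner_self_nonneg
    rw [hdef]
    have hkey : ⟪B,x⟫ * ⟪B,x⟫ ≤ ⟪x,x⟫ := by
      nlinarith [mul_nonneg (show (0:ℝ) ≤ 1 - ⟪B,B⟫ by linarith) hx0]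
    exact mul_nonneg hμ0.le (by linarith)
  have hposdef : ∀ x : V, x ≠ 0 → 0 < h x x := by
    intro x hx
    have hcs := real_inner_mul_inner_self_le B x
    have hx0 : (0:ℝ) < ⟪x,x⟫ :=
      lt_of_le_of_ne real_inner_self_nonneg (fun e => hx (inner_self_eq_zero.mp e.symm))
    rw [hdef]
    have hkey : ⟪B,x⟫ * ⟪B,x⟫ < ⟪x,x⟫ := by
      nlinarith [mul_pos (show (0:ℝ) < 1 - ⟪B,B⟫ by linarith) hx0]
    exact mul_pos hμ0 (by linarith)
  -- symmetry and bilinearity helpers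
  have hsymm : ∀ x y : V, h x y = h y x := by
    intro x y
    simp only [hdef]
    rw [real_inner_comm x y]
    ring
  have haddexp : ∀ x y : V, h (x+y) (x+y) = h x x + 2 * h x y + h y y := by
    intro x y
    simp only [hdef, inner_add_left, inner_add_right]
    rw [real_inner_comm y x]
    ring
  have hquad : ∀ (t : ℝ) (x y : V),
      h (t • x - y) (t • x - y) = t^2 * h x x - 2*t*(h x y) + h y y := by
    intro t x y
    simp only [hdef, inner_sub_left, inner_sub_right, real_inner_smul_left,
      real_inner_smul_right]
    rw [real_inner_comm y x]
    ring
  -- the linear map T representing h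
  have hTex : ∃ T : V →ₗ[ℝ] V, ∀ x y : V, h x y = ⟪T x, y⟫ := by
    refine ⟨{ toFun := fun x => μ • x - (μ * ⟪B, x⟫) • B,
              map_add' := ?_, map_smul' := ?_ }, ?_⟩
    · intro x y
      simp only [inner_add_right, smul_add, add_smul, mul_add]
      abel
    · intro c x
      simp only [real_inner_smul_right, RingHom.id_apply, smul_sub, smul_smul]
      ring_nf
    · intro x y
      rw [hdef]
      simp only [LinearMap.coe_mk, AddHom.coe_mk, inner_sub_left, real_inner_smul_left]
      ring
  obtain ⟨T, hT⟩ := hTex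
  obtain ⟨σ, hσπ, hσQ⟩ := exists_sigma h T hT hposdef π hπ
  have hσinj : Function.Injective σ := by
    intro a b hab
    have := congrArg π hab
    rwa [hσπ, hσπ] at this
  have hsublin : ∀ x y z : V, h (x - y) z = h x z - h y z := by
    intro x y z
    simp only [hdef, inner_sub_left, inner_sub_right]
    ring
  have hσfix : ∀ u : V, (∀ k ∈ LinearMap.ker π, h u k = 0) → σ (π u) = u := by
    intro u hu
    have hdK : σ (π u) - u ∈ LinearMap.ker π := by
      simp [LinearMap.mem_ker, map_sub, hσπ]
    have h3 : h (σ (π u) - u) (σ (π u) - u) = 0 := by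
      rw [hsublin, hσQ (π u) _ hdK, hu _ hdK, sub_zero]
    have hd0 : σ (π u) - u = 0 := by
      by_contra hne
      exact absurd h3 (ne_of_gt (hposdef _ hne))
    exact sub_eq_zero.mp hd0
  -- projection decreases h-norm
  have hproj : ∀ u : V, h (σ (π u)) (σ (π u)) ≤ h u u := by
    intro u
    have hk : u - σ (π u) ∈ LinearMap.ker π := by
      simp [LinearMap.mem_ker, map_sub, hσπ]
    have hcross : h (σ (π u)) (u - σ (π u)) = 0 := hσQ (π u) _ hk
    have hexp : h u u = h (σ (π u)) (σ (π u)) + 2 * h (σ (π u)) (u - σ (π u))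
        + h (u - σ (π u)) (u - σ (π u)) := by
      conv_lhs => rw [show u = σ (π u) + (u - σ (π u)) by abel]
      exact haddexp _ _
    have := hpossemi (u - σ (π u))
    linarith [hexp, hcross, this]
  -- Zermelo ball identity
  have hWW : h W W = ⟪B, B⟫ := by
    rw [hdef, hWdef]
    simp only [inner_neg_left, inner_neg_right, real_inner_smul_left, real_inner_smul_right,
      neg_neg, mul_neg, neg_mul]
    field_simp
    rw [hμ]
    ring
  have lemA : ∀ v : V, Z v < 1 ↔ h (v - W) (v - W) < 1 := by
    intro v
    have hq0 : (0:ℝ) ≤ ⟪v,v⟫ := real_inner_self_nonneg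
    have hcs : ⟪v,B⟫ * ⟪v,B⟫ ≤ ⟪v,v⟫ * ⟪B,B⟫ := real_inner_mul_inner_self_le v B
    have hval : h (v - W) (v - W)
        = μ * (⟪v,v⟫ + 2*⟪v,B⟫ - ⟪v,B⟫*⟪v,B⟫) + ⟪B,B⟫ := by
      rw [hdef, hWdef]
      simp only [sub_neg_eq_add, inner_add_left, inner_add_right, real_inner_smul_left,
        real_inner_smul_right]
      rw [real_inner_comm B v]
      field_simp
      rw [hμ]
      ring
    rw [hZdef, hval]
    constructor
    · intro hZ
      have hsq := Real.sqrt_nonneg ⟪v,v⟫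
      have hs1 : ⟪v,B⟫ < 1 := by linarith
      have hq : ⟪v,v⟫ < (1 - ⟪v,B⟫)^2 :=
        (Real.sqrt_lt' (by linarith)).mp (by linarith)
      rw [hμ]
      nlinarith [hq, hB, hb0]
    · intro hh
      have hkey : ⟪v,v⟫ + 2*⟪v,B⟫ - ⟪v,B⟫*⟪v,B⟫ < 1 := by
        rw [hμ] at hh
        nlinarith [hh, hB]
      have hs1 : ⟪v,B⟫ < 1 := by
        by_contra hc
        push_neg at hc
        nlinarith [hcs, hq0, mul_nonneg (show (0:ℝ) ≤ 1 - ⟪B,B⟫ by linarith) hq0]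
      have : Real.sqrt ⟪v,v⟫ < 1 - ⟪v,B⟫ :=
        (Real.sqrt_lt' (by linarith)).mpr (by nlinarith)
      linarith
  -- the ball equivalence for Z₂
  have E : ∀ w₂ : V₂, Z₂ w₂ < 1 ↔ h (σ (w₂ - π W)) (σ (w₂ - π W)) < 1 := by
    intro w₂
    constructor
    · intro hZ2
      have hw : w₂ ∈ π '' {v : V | Z v < 1} := by rw [hsub]; exact hZ2
      obtain ⟨v, hv, rfl⟩ := hw
      have h1 : h (v - W) (v - W) < 1 := (lemA v).mp hv
      have h2 : h (σ (π (v - W))) (σ (π (v - W))) ≤ h (v - W) (v - W) := hproj _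
      rw [map_sub] at h2
      linarith
    · intro hh
      have hv : Z (σ (w₂ - π W) + W) < 1 := by
        rw [lemA]
        simpa [add_sub_cancel_right] using hh
      have : w₂ ∈ π '' {v : V | Z v < 1} := by
        refine ⟨σ (w₂ - π W) + W, hv, ?_⟩
        rw [map_add, hσπ]
        abel
      rw [hsub] at this
      exact this
  -- positivity of Z₂
  have hZ2pos : ∀ w : V₂, w ≠ 0 → 0 < Z₂ w := by
    intro w hw
    rcases lt_or_eq_of_le (hZ₂.nonneg w) with hgt | heq
    · exact hgt
    have hZ0 : Z₂ w = 0 := heq.symm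
    exfalso
    have hσw : σ w ≠ 0 := fun e => hw (hσinj (e.trans (map_zero σ).symm))
    have hA : 0 < h (σ w) (σ w) := hposdef _ hσw
    set A := h (σ w) (σ w) with hAdef
    set C := h (σ w) (σ (π W)) with hCdef
    set D := h (σ (π W)) (σ (π W)) with hDdef
    set t := (1 + 2*|C| + |D| + A)/A with htdef
    clear_value A C D
    have ht1 : 1 ≤ t := by
      rw [htdef, le_div_iff₀ hA]
      nlinarith [abs_nonneg C, abs_nonneg D]
    have ht0 : 0 < t := lt_of_lt_of_le one_pos ht1
    have htA : t * A = 1 + 2*|C| + |D| + A := div_mul_cancel₀ _ (ne_of_gt hA)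
    have hZt : Z₂ (t • w) < 1 := by
      rw [hZ₂.homog t ht0 w, hZ0, mul_zero]
      norm_num
    have hlt := (E (t • w)).mp hZt
    rw [map_sub, map_smul, hquad, ← hAdef, ← hCdef, ← hDdef] at hlt
    have e3 : 1 + 2*t*|C| + |D| + A ≤ t*(1 + 2*|C| + |D| + A) := by
      have p1 : 0 ≤ (t-1)*|D| := mul_nonneg (by linarith) (abs_nonneg D)
      have p2 : 0 ≤ (t-1)*A := mul_nonneg (by linarith) hA.le
      nlinarith [p1, p2]
    have e1 : t^2*A = t*(t*A) := by ring
    have e2 : t*(t*A) = t*(1 + 2*|C| + |D| + A) := by rw [htA]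
    have q1 : 0 ≤ t*(|C| - C) := mul_nonneg ht0.le (by linarith [le_abs_self C])
    have q2 : -|D| ≤ D := neg_abs_le D
    linarith [hlt, e1, e2, e3, q1, q2, hA]
  refine ⟨fun w₁ w₂ => h (σ w₁) (σ w₂), ?_, ?_, ?_, ?_, ?_⟩
  · intro u₁ u₂
    exact hsymm _ _
  · intro w hw
    exact hposdef _ (fun e => hw (hσinj (e.trans (map_zero σ).symm)))
  · intro u v hu hv
    simp only [Set.mem_setOf_eq] at hu hv
    simp only [hσfix u hu, hσfix v hv]
  · have h1 : h (σ (π W)) (σ (π W)) ≤ h W W := hproj W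
    have h2 := hWW
    simp only []
    linarith [hB]
  · intro w hw
    have hZp := hZ2pos w hw
    refine ⟨hZp, ?_⟩
    set r := (Z₂ w)⁻¹ with hrdef
    set A := h (σ w) (σ w) with hAdef
    set C := h (σ w) (σ (π W)) with hCdef
    set D := h (σ (π W)) (σ (π W)) with hDdef
    have hr0 : 0 < r := by rw [hrdef]; exact inv_pos.mpr hZp
    have hZu : Z₂ (r • w) = 1 := by
      rw [hZ₂.homog r hr0 w, hrdef, inv_mul_cancel₀ (ne_of_gt hZp)]
    clear_value r A C D
    have hvalD : ∀ s : ℝ, h (σ (s • w - π W)) (σ (s • w - π W)) = s^2*A - 2*s*C + D := by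
      intro s
      rw [map_sub, map_smul, hquad, ← hAdef, ← hCdef, ← hDdef]
    show h (σ (r • w - π W)) (σ (r • w - π W)) = 1
    rw [hvalD r]
    have hge : ¬ (r^2*A - 2*r*C + D < 1) := by
      intro hlt
      have hE := (E (r • w)).mpr (by rw [hvalD r]; exact hlt)
      rw [hZu] at hE
      exact lt_irrefl 1 hE
    have hf : ∀ t ∈ Set.Ioo (0:ℝ) 1, t^2*(r^2*A) - 2*t*(r*C) + D < 1 := by
      intro t ht
      have hZt : Z₂ ((t*r) • w) = t := by
        rw [mul_smul, hZ₂.homog t ht.1 _, hZu, mul_one]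
      have hE := (E ((t*r) • w)).mp (by rw [hZt]; exact ht.2)
      rw [hvalD (t*r)] at hE
      linarith [hE]
    have hcf : Continuous (fun t : ℝ => t^2*(r^2*A) - 2*t*(r*C) + D) := by fun_prop
    have hcont : Filter.Tendsto (fun t : ℝ => t^2*(r^2*A) - 2*t*(r*C) + D)
        (nhdsWithin 1 (Set.Iio 1)) (nhds ((1:ℝ)^2*(r^2*A) - 2*1*(r*C) + D)) :=
      (hcf.tendsto 1).mono_left nhdsWithin_le_nhds
    have hev : ∀ᶠ t in nhdsWithin (1:ℝ) (Set.Iio 1),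
        t^2*(r^2*A) - 2*t*(r*C) + D ≤ 1 :=
      Filter.eventually_of_mem
        (Ioo_mem_nhdsLT_of_mem (by constructor <;> norm_num : (1:ℝ) ∈ Set.Ioc 0 1))
        (fun t ht => le_of_lt (hf t ht))
    have hlim := le_of_tendsto hcont hev
    linarith [hlim, not_lt.mp hge]
end
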